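/- arXiv:1312.5942 — 3 statements merged into one kernel-verified Lean document; each statement's English description precedes it below -/
import Mathlib

section
/- Let (μ_n) be a sequence in 𝓜 converging weakly to μ ∈ 𝓜 with lim_{n→∞} ∫ log η dμ_n = ∫ log η dμ > −∞, and let q ≥ 1. Then there exists a function δ : (0,1) → [0,∞) with δ(ε) → 0 as ε → 0 such that for all i,j ∈ {0,…,q−1} and every ε ∈ (0,1): (a) for all sufficiently large n, 0 ≥ ∫_{{η∘f^i ≤ ε}} log(η∘f^j) dμ_n ≥ −δ(ε); and (b) 0 ≥ ∫_{{η∘f^i ≤ ε}} log(η∘f^j) dμ ≥ −δ(ε). -/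
open MeasureTheory Filter Metric Set
open scoped ENNReal NNReal Topology

noncomputable section

variable {X : Type*} [MetricSpace X] [CompactSpace X] [MeasurableSpace X] [BorelSpace X]

/-- `Ω = X \ ⋃_{i ≥ 0} f^{-i}(I)`: the set of points whose whole forward orbit avoids `I`. -/
def dynOmega (f : X → X) (I : Set X) : Set X := {x | ∀ n : ℕ, f^[n] x ∉ I}

/-- `μ ∈ 𝓜`: a Borel probability measure with `μ(I) = 0` which is invariant, `f_* μ = μ`. -/
def MemM (f : X → X) (I : Set X) (μ : Measure X) : Prop :=
  IsProbabilityMeasure μ ∧ μ I = 0 ∧ Measure.map f μ = μ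

/-!
For an invariant probability measure `ν` and the cutoff `t = exp (-√(-log ε))`, split
`log (η ∘ fʲ) = (log η - log (max η t)) ∘ fʲ + log (max η t) ∘ fʲ`. The first summand is
nonpositive, so its integral over `{η ∘ fⁱ ≤ ε}` is at least its integral over `X`, which by
invariance is `∫ log η dν - ∫ log (max η t) dν`; the second is at least `log t`, and by invariance
and Markov's inequality `ν {η ∘ fⁱ ≤ ε} ≤ ‖log η‖₁ / (-log ε)`. With this `t` the two error terms
become `∫ log (max η t) dμ - ∫ log η dμ → 0` (dominated convergence) and `‖log η‖₁ / √(-log ε)`.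
The resulting lower bound depends on `ν` only through `∫ log η dν` and the integral of the
continuous function `log (max η t)`, so it passes from `μ` to `μₙ` for large `n`.
-/

open Real

section LogCutoff

variable {α : Type*} [MeasurableSpace α] {ν : Measure α} {ψ : α → ℝ}

theorem integrable_log_max (hψm : Measurable ψ) (hψ : ∀ᵐ x ∂ν, ψ x ∈ Ioc 0 1)
    (hint : Integrable (fun x => log (ψ x)) ν) {t : ℝ} (ht : t ∈ Ioc 0 1) :
    Integrable (fun x => log (max (ψ x) t)) ν := by
  refine hint.mono (measurable_log.comp (hψm.max measurable_const)).aestronglyMeasurable ?_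
  filter_upwards [hψ] with x hx
  have hle : log (ψ x) ≤ log (max (ψ x) t) := log_le_log hx.1 (le_max_left _ _)
  have hnonpos : log (max (ψ x) t) ≤ 0 :=
    log_nonpos (ht.1.le.trans (le_max_right _ _)) (max_le hx.2 ht.2)
  rw [norm_eq_abs, norm_eq_abs, abs_of_nonpos hnonpos, abs_of_nonpos (hle.trans hnonpos)]
  linarith

theorem measureReal_setOf_le_le_div_neg_log [IsFiniteMeasure ν] (hψ : ∀ᵐ x ∂ν, ψ x ∈ Ioc 0 1)
    (hint : Integrable (fun x => log (ψ x)) ν) {ε : ℝ} (hε : ε ∈ Ioo 0 1) :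
    ν.real {x | ψ x ≤ ε} ≤ (-∫ x, log (ψ x) ∂ν) / -log ε := by
  have hlogε : 0 < -log ε := neg_pos.mpr (log_neg hε.1 hε.2)
  have hmarkov := mul_meas_ge_le_integral_of_nonneg
    (hψ.mono fun x hx => neg_nonneg.mpr (log_nonpos hx.1.le hx.2)) hint.neg (-log ε)
  have hsub : {x | ψ x ≤ ε} ≤ᵐ[ν] {x | -log ε ≤ -log (ψ x)} := by
    filter_upwards [hψ] with x hx hxε
    exact neg_le_neg (log_le_log hx.1 hxε)
  have hmono : ν.real {x | ψ x ≤ ε} ≤ ν.real {x | -log ε ≤ -log (ψ x)} :=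
    ENNReal.toReal_mono (measure_ne_top _ _) (measure_mono_ae hsub)
  rw [le_div_iff₀ hlogε, ← integral_neg]
  nlinarith

theorem le_setIntegral_log [IsFiniteMeasure ν] (hψm : Measurable ψ)
    (hψ : ∀ᵐ x ∂ν, ψ x ∈ Ioc 0 1) (hint : Integrable (fun x => log (ψ x)) ν)
    (A : Set α) {t : ℝ} (ht : t ∈ Ioc 0 1) :
    (∫ x, log (ψ x) ∂ν) - (∫ x, log (max (ψ x) t) ∂ν) + log t * ν.real A
      ≤ ∫ x in A, log (ψ x) ∂ν := by
  set g := fun x => log (max (ψ x) t)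
  have hg : Integrable g ν := integrable_log_max hψm hψ hint ht
  have hdefect : Integrable (fun x => log (ψ x) - g x) ν := hint.sub hg
  have hdefect_nonpos : ∀ᵐ x ∂ν, log (ψ x) - g x ≤ 0 := by
    filter_upwards [hψ] with x hx
    exact sub_nonpos.mpr (log_le_log hx.1 (le_max_left _ _))
  have hwhole_le_set : (∫ x, log (ψ x) - g x ∂ν) ≤ ∫ x in A, log (ψ x) - g x ∂ν := by
    have := setIntegral_le_integral (s := A) hdefect.neg
      (hdefect_nonpos.mono fun x hx => neg_nonneg.mpr hx)
    simp only [Pi.neg_apply, integral_neg] at this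
    linarith
  calc (∫ x, log (ψ x) ∂ν) - (∫ x, g x ∂ν) + log t * ν.real A
      = (∫ x, log (ψ x) - g x ∂ν) + ∫ _ in A, log t ∂ν := by
        rw [integral_sub hint hg, setIntegral_const, smul_eq_mul, mul_comm]
    _ ≤ (∫ x in A, log (ψ x) - g x ∂ν) + ∫ _ in A, log t ∂ν := by gcongr
    _ = ∫ x in A, log (ψ x) - g x + log t ∂ν :=
        (integral_add hdefect.integrableOn (integrable_const _)).symm
    _ ≤ ∫ x in A, log (ψ x) ∂ν := by
        refine setIntegral_mono (hdefect.add (integrable_const _)).integrableOn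
          hint.integrableOn fun x => ?_
        have : log t ≤ g x := log_le_log ht.1 (le_max_right _ _)
        linarith

theorem tendsto_integral_log_max_nhdsGT_zero (hψm : Measurable ψ)
    (hψ : ∀ᵐ x ∂ν, ψ x ∈ Ioc 0 1) (hint : Integrable (fun x => log (ψ x)) ν) :
    Tendsto (fun t => ∫ x, log (max (ψ x) t) ∂ν) (𝓝[>] 0) (𝓝 (∫ x, log (ψ x) ∂ν)) := by
  refine tendsto_integral_filter_of_dominated_convergence (fun x => ‖log (ψ x)‖)
    (Eventually.of_forall fun t =>
      (measurable_log.comp (hψm.max measurable_const)).aestronglyMeasurable)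
    ?_ hint.norm ?_
  · filter_upwards [Ioo_mem_nhdsGT one_pos] with t ht
    filter_upwards [hψ] with x hx
    have hle : log (ψ x) ≤ log (max (ψ x) t) := log_le_log hx.1 (le_max_left _ _)
    have hnonpos : log (max (ψ x) t) ≤ 0 :=
      log_nonpos (ht.1.le.trans (le_max_right _ _)) (max_le hx.2 ht.2.le)
    rw [norm_eq_abs, norm_eq_abs, abs_of_nonpos hnonpos, abs_of_nonpos (hle.trans hnonpos)]
    linarith
  · filter_upwards [hψ] with x hx
    refine tendsto_const_nhds.congr' ?_
    filter_upwards [Ioo_mem_nhdsGT hx.1] with t ht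
    rw [max_eq_left ht.2.le]

end LogCutoff

def logCutoff (ε : ℝ) : ℝ := exp (-√(-log ε))

def logIntegralLowerBound {α : Type*} [MeasurableSpace α] (η : α → ℝ) (ν : Measure α)
    (ε : ℝ) : ℝ :=
  (1 + (√(-log ε))⁻¹) * (∫ x, log (η x) ∂ν) - ∫ x, log (max (η x) (logCutoff ε)) ∂ν

theorem logCutoff_mem_Ioc (ε : ℝ) : logCutoff ε ∈ Ioc 0 1 :=
  ⟨exp_pos _, exp_le_one_iff.mpr (neg_nonpos.mpr (sqrt_nonneg _))⟩

theorem tendsto_sqrt_neg_log_nhdsGT_zero :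
    Tendsto (fun ε => √(-log ε)) (𝓝[>] 0) atTop :=
  tendsto_sqrt_atTop.comp (tendsto_neg_atBot_atTop.comp tendsto_log_nhdsGT_zero)

theorem tendsto_logCutoff_nhdsGT_zero : Tendsto logCutoff (𝓝[>] 0) (𝓝[>] 0) :=
  tendsto_nhdsWithin_iff.mpr
    ⟨tendsto_exp_atBot.comp (tendsto_neg_atTop_atBot.comp tendsto_sqrt_neg_log_nhdsGT_zero),
      Eventually.of_forall fun _ => exp_pos _⟩

section Dynamics

variable {α : Type*} [MeasurableSpace α] {ν : Measure α} {η : α → ℝ}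

theorem logIntegralLowerBound_le_setIntegral [IsFiniteMeasure ν] {f : α → α}
    (hf : MeasurePreserving f ν ν) (hηm : Measurable η) (hη : ∀ᵐ x ∂ν, η x ∈ Ioc 0 1)
    (hint : Integrable (fun x => log (η x)) ν) (i j : ℕ) {ε : ℝ} (hε : ε ∈ Ioo 0 1) :
    logIntegralLowerBound η ν ε ≤ ∫ x in {x | η (f^[i] x) ≤ ε}, log (η (f^[j] x)) ∂ν := by
  have hfj := hf.iterate j
  have hcomp : ∀ g : α → ℝ, Measurable g → ∫ x, g (f^[j] x) ∂ν = ∫ x, g x ∂ν := fun g hg => by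
    rw [← integral_map hfj.aemeasurable (hfj.map_eq ▸ hg.aestronglyMeasurable), hfj.map_eq]
  have hlog_comp : ∫ x, log (η (f^[j] x)) ∂ν = ∫ x, log (η x) ∂ν :=
    hcomp _ (measurable_log.comp hηm)
  have hlog_max_comp : ∫ x, log (max (η (f^[j] x)) (logCutoff ε)) ∂ν =
      ∫ x, log (max (η x) (logCutoff ε)) ∂ν :=
    hcomp _ (measurable_log.comp (hηm.max measurable_const))
  have hA : ν.real {x | η (f^[i] x) ≤ ε} = ν.real {x | η x ≤ ε} :=
    (hf.iterate i).measureReal_preimage (measurableSet_le hηm measurable_const).nullMeasurableSet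
  have hbound := le_setIntegral_log (ψ := fun x => η (f^[j] x)) (hηm.comp hfj.measurable)
    (hfj.quasiMeasurePreserving.ae hη)
    ((hfj.integrable_comp (measurable_log.comp hηm).aestronglyMeasurable).mpr hint)
    {x | η (f^[i] x) ≤ ε} (logCutoff_mem_Ioc ε)
  rw [hlog_comp, hlog_max_comp, hA] at hbound
  have hmarkov := measureReal_setOf_le_le_div_neg_log hη hint hε
  set s := √(-log ε)
  have hs : 0 < s := sqrt_pos.mpr (neg_pos.mpr (log_neg hε.1 hε.2))
  have hss : -log ε = s * s := (mul_self_sqrt (neg_pos.mpr (log_neg hε.1 hε.2)).le).symm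
  have hcutoff_term : s⁻¹ * ∫ x, log (η x) ∂ν ≤ log (logCutoff ε) * ν.real {x | η x ≤ ε} := by
    rw [hss] at hmarkov
    rw [show log (logCutoff ε) = -s from log_exp _]
    calc s⁻¹ * ∫ x, log (η x) ∂ν = -s * ((-∫ x, log (η x) ∂ν) / (s * s)) := by
          field_simp
      _ ≤ -s * ν.real {x | η x ≤ ε} := mul_le_mul_of_nonpos_left hmarkov (by linarith)
  unfold logIntegralLowerBound
  linarith

theorem tendsto_logIntegralLowerBound_nhdsGT_zero (hηm : Measurable η)
    (hη : ∀ᵐ x ∂ν, η x ∈ Ioc 0 1) (hint : Integrable (fun x => log (η x)) ν) :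
    Tendsto (logIntegralLowerBound η ν) (𝓝[>] 0) (𝓝 0) := by
  have hfactor : Tendsto (fun ε => 1 + (√(-log ε))⁻¹) (𝓝[>] 0) (𝓝 1) := by
    simpa using tendsto_const_nhds.add
      (tendsto_inv_atTop_zero.comp tendsto_sqrt_neg_log_nhdsGT_zero)
  have hcutoff := (tendsto_integral_log_max_nhdsGT_zero hηm hη hint).comp
    tendsto_logCutoff_nhdsGT_zero
  have hlim := (hfactor.mul_const (∫ x, log (η x) ∂ν)).sub hcutoff
  rwa [one_mul, sub_self] at hlim

theorem tendsto_logIntegralLowerBound_of_tendsto [TopologicalSpace α] (hηc : Continuous η)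
    {ι : Type*} {l : Filter ι} {μs : ι → Measure α}
    (hweak : ∀ g : C(α, ℝ), Tendsto (fun n => ∫ x, g x ∂(μs n)) l (𝓝 (∫ x, g x ∂ν)))
    (hlim : Tendsto (fun n => ∫ x, log (η x) ∂(μs n)) l (𝓝 (∫ x, log (η x) ∂ν))) (ε : ℝ) :
    Tendsto (fun n => logIntegralLowerBound η (μs n) ε) l (𝓝 (logIntegralLowerBound η ν ε)) :=
  (hlim.const_mul _).sub (hweak ⟨_, (hηc.max continuous_const).log fun _ =>
    (lt_max_of_lt_right (exp_pos _)).ne'⟩)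

end Dynamics

theorem ae_mem_Ioc_of_measure_eq_zero {α : Type*} [MeasurableSpace α] {ν : Measure α}
    {η : α → ℝ} (hη01 : ∀ x, η x ∈ Icc (0 : ℝ) 1) (hzero : ν {x | η x = 0} = 0) :
    ∀ᵐ x ∂ν, η x ∈ Ioc 0 1 := by
  filter_upwards [(ae_iff (p := fun x => η x ≠ 0)).mpr (by simpa using hzero)] with x hx
  exact ⟨(hη01 x).1.lt_of_ne' hx, (hη01 x).2⟩

theorem integral_estimate_near_indeterminacy_general
    (f : X → X) (I : Set X)
    (hf : Measurable f)
    (η : X → ℝ) (hηc : Continuous η) (hη01 : ∀ x, η x ∈ Icc (0 : ℝ) 1)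
    (μseq : ℕ → Measure X) (μ : Measure X)
    (hμseq : ∀ n, MemM f I (μseq n)) (hμ : MemM f I μ)
    (hweak : ∀ g : C(X, ℝ),
      Tendsto (fun n => ∫ x, g x ∂(μseq n)) atTop (𝓝 (∫ x, g x ∂μ)))
    (hint : ∀ n, Integrable (fun x => Real.log (η x)) (μseq n))
    (hzero : ∀ n, (μseq n) {x | η x = 0} = 0)
    (hintμ : Integrable (fun x => Real.log (η x)) μ)
    (hzeroμ : μ {x | η x = 0} = 0)
    (hlim : Tendsto (fun n => ∫ x, Real.log (η x) ∂(μseq n)) atTop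
      (𝓝 (∫ x, Real.log (η x) ∂μ)))
    (q : ℕ) :
    ∃ δ : ℝ → ℝ, (∀ ε, 0 ≤ δ ε) ∧ Tendsto δ (𝓝[>] (0 : ℝ)) (𝓝 0) ∧
      ∀ i < q, ∀ j < q, ∀ ε ∈ Ioo (0 : ℝ) 1,
        (∀ᶠ n in atTop,
          (∫ x in {x | η (f^[i] x) ≤ ε}, Real.log (η (f^[j] x)) ∂(μseq n)) ≤ 0 ∧
          -δ ε ≤ ∫ x in {x | η (f^[i] x) ≤ ε}, Real.log (η (f^[j] x)) ∂(μseq n)) ∧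
        ((∫ x in {x | η (f^[i] x) ≤ ε}, Real.log (η (f^[j] x)) ∂μ) ≤ 0 ∧
          -δ ε ≤ ∫ x in {x | η (f^[i] x) ≤ ε}, Real.log (η (f^[j] x)) ∂μ) := by
  have hηm : Measurable η := hηc.measurable
  have hbound : ∀ ν, MemM f I ν → Integrable (fun x => Real.log (η x)) ν →
      ν {x | η x = 0} = 0 → ∀ i j, ∀ ε ∈ Ioo (0 : ℝ) 1, logIntegralLowerBound η ν ε ≤
        ∫ x in {x | η (f^[i] x) ≤ ε}, Real.log (η (f^[j] x)) ∂ν := fun ν hν hintν h0 i j ε hε =>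
    have := hν.1
    logIntegralLowerBound_le_setIntegral ⟨hf, hν.2.2⟩ hηm (ae_mem_Ioc_of_measure_eq_zero hη01 h0)
      hintν i j hε
  have hnonpos : ∀ ν : Measure X, ∀ i j, ∀ ε : ℝ,
      ∫ x in {x | η (f^[i] x) ≤ ε}, Real.log (η (f^[j] x)) ∂ν ≤ 0 := fun ν i j ε =>
    setIntegral_nonpos (measurableSet_le (hηm.comp (hf.iterate i)) measurable_const)
      fun x _ => log_nonpos (hη01 _).1 (hη01 _).2
  set B := logIntegralLowerBound η μ
  -- the slack `ε` absorbs the error in `logIntegralLowerBound η (μseq n) ε → B ε`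
  refine ⟨fun ε => max 0 (ε - B ε), fun ε => le_max_left _ _, ?_, fun i _ j _ ε hε => ⟨?_, ?_⟩⟩
  · have hB : Tendsto B (𝓝[>] 0) (𝓝 0) := tendsto_logIntegralLowerBound_nhdsGT_zero hηm
      (ae_mem_Ioc_of_measure_eq_zero hη01 hzeroμ) hintμ
    simpa only [id_eq, sub_zero, max_self] using
      (tendsto_const_nhds (x := (0 : ℝ))).max ((tendsto_id.mono_left nhdsWithin_le_nhds).sub hB)
  · filter_upwards [(tendsto_logIntegralLowerBound_of_tendsto hηc hweak hlim ε).eventually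
      (eventually_gt_nhds (sub_lt_self (B ε) hε.1))] with n hn
    have := hbound _ (hμseq n) (hint n) (hzero n) i j ε hε
    exact ⟨hnonpos _ i j ε, by linarith [le_max_right 0 (ε - B ε)]⟩
  · have := hbound μ hμ hintμ hzeroμ i j ε hε
    exact ⟨hnonpos μ i j ε, by linarith [le_max_right 0 (ε - B ε), hε.1]⟩

/-- **Lemma (estimation of integrals).** Let `(μ_n)` be a sequence of `𝓜` converging weakly
to `μ ∈ 𝓜`, with `lim_n ∫ log η dμ_n = ∫ log η dμ > -∞` (the condition `> -∞` is encoded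
as integrability of `log ∘ η` together with `ν{η = 0} = 0`), and let `q ≥ 1`. Then there is
a function `δ(ε) ≥ 0`, tending to `0` as `ε → 0⁺`, such that for all `i, j ∈ {0, …, q-1}`
and all `ε ∈ (0,1)`:
(a) for all sufficiently large `n`, `0 ≥ ∫_{η∘f^i ≤ ε} log (η ∘ f^j) dμ_n ≥ -δ(ε)`, and
(b) `0 ≥ ∫_{η∘f^i ≤ ε} log (η ∘ f^j) dμ ≥ -δ(ε)`. -/
theorem integral_estimate_near_indeterminacy
    (f : X → X) (I : Set X) (hI : IsClosed I)
    (hf : Measurable f) (hfc : ContinuousOn f Iᶜ)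
    (η : X → ℝ) (hηc : Continuous η) (hη01 : ∀ x, η x ∈ Icc (0 : ℝ) 1)
    (hηI : ∀ x ∈ I, η x = 0)
    (μseq : ℕ → Measure X) (μ : Measure X)
    (hμseq : ∀ n, MemM f I (μseq n)) (hμ : MemM f I μ)
    (hweak : ∀ g : C(X, ℝ),
      Tendsto (fun n => ∫ x, g x ∂(μseq n)) atTop (𝓝 (∫ x, g x ∂μ)))
    (hint : ∀ n, Integrable (fun x => Real.log (η x)) (μseq n))
    (hzero : ∀ n, (μseq n) {x | η x = 0} = 0)
    (hintμ : Integrable (fun x => Real.log (η x)) μ)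
    (hzeroμ : μ {x | η x = 0} = 0)
    (hlim : Tendsto (fun n => ∫ x, Real.log (η x) ∂(μseq n)) atTop
      (𝓝 (∫ x, Real.log (η x) ∂μ)))
    (q : ℕ) (hq : 1 ≤ q) :
    ∃ δ : ℝ → ℝ, (∀ ε, 0 ≤ δ ε) ∧ Tendsto δ (𝓝[>] (0 : ℝ)) (𝓝 0) ∧
      ∀ i < q, ∀ j < q, ∀ ε ∈ Ioo (0 : ℝ) 1,
        (∀ᶠ n in atTop,
          (∫ x in {x | η (f^[i] x) ≤ ε}, Real.log (η (f^[j] x)) ∂(μseq n)) ≤ 0 ∧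
          -δ ε ≤ ∫ x in {x | η (f^[i] x) ≤ ε}, Real.log (η (f^[j] x)) ∂(μseq n)) ∧
        ((∫ x in {x | η (f^[i] x) ≤ ε}, Real.log (η (f^[j] x)) ∂μ) ≤ 0 ∧
          -δ ε ≤ ∫ x in {x | η (f^[i] x) ≤ ε}, Real.log (η (f^[j] x)) ∂μ) :=
  integral_estimate_near_indeterminacy_general f I hf η hηc hη01 μseq μ hμseq hμ hweak hint hzero
    hintμ hzeroμ hlim q
end
end

section
/- Let (μ_n) be a sequence in 𝓜 converging weakly to μ ∈ 𝓜 with lim_{n→∞} ∫ log η dμ_n = ∫ log η dμ > −∞. If μ gives zero mass to the boundaries of the atoms of 𝒫, then for every q ≥ 1, lim_{n→∞} H_{μ_n}(⋁_{i=0}^{q−1} f^{−i}𝒫) = H_μ(⋁_{i=0}^{q−1} f^{−i}𝒫). -/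
open MeasureTheory Filter Metric Set
open scoped ENNReal NNReal Topology

noncomputable section

variable {X : Type*} [MetricSpace X] [CompactSpace X] [MeasurableSpace X] [BorelSpace X]

/-- A countable Borel partition of a set `S`, indexed by `ℕ` (empty atoms are allowed). -/
def IsCountablePartition (S : Set X) (P : ℕ → Set X) : Prop :=
  (∀ i, MeasurableSet (P i)) ∧ (Pairwise fun i j => Disjoint (P i) (P j)) ∧ (⋃ i, P i) = S

/-- The entropy `H_ν(P) = ∑_{P ∈ 𝒫} - ν(P) log ν(P)` of a countable partition,
with values in `ℝ≥0∞`. -/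
def partEntropy {ι : Type*} (ν : Measure X) (P : ι → Set X) : ℝ≥0∞ :=
  ∑' i, ENNReal.ofReal (Real.negMulLog (ν (P i)).toReal)

/-- The atoms of the refined partition `⋁_{i=0}^{q-1} f^{-i} 𝒫`. -/
def refinedAtoms (f : X → X) (P : ℕ → Set X) (q : ℕ) : (Fin q → ℕ) → Set X :=
  fun s => ⋂ i : Fin q, f^[(i : ℕ)] ⁻¹' P (s i)

/-- `V_n = {x : e^{-(n+1)} < η x ≤ e^{-n}}`. -/
def Vset (η : X → ℝ) (n : ℕ) : Set X :=
  {x | Real.exp (-(n + 1 : ℝ)) < η x ∧ η x ≤ Real.exp (-(n : ℝ))}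

/-- The Mané partition `𝒫` associated to `η` on a manifold of complex dimension `k`:
a countable Borel partition of `{η ≠ 0}` such that every nonempty atom is contained in
some `V_n` and has diameter `< r_n = e^{-(n+1)}`, and such that the number of atoms
contained in `V_n` is at most `C (1/r_n)^{2k} = C e^{2k(n+1)}` for a constant `C > 0`. -/
def IsManePartition (k : ℕ) (η : X → ℝ) (P : ℕ → Set X) : Prop :=
  IsCountablePartition {x | η x ≠ 0} P ∧
  (∀ i, (P i).Nonempty → ∃ n : ℕ, P i ⊆ Vset η n ∧
      Metric.diam (P i) < Real.exp (-(n + 1 : ℝ))) ∧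
  (∃ C > (0 : ℝ), ∀ n : ℕ,
      {i | (P i).Nonempty ∧ P i ⊆ Vset η n}.Finite ∧
      (({i | (P i).Nonempty ∧ P i ⊆ Vset η n}.ncard : ℝ)
        ≤ C * Real.exp (2 * k * (n + 1 : ℝ))))

/-!
Restricting the atoms to `Ω` changes none of their measures, `Ω` being conull for invariant
measures with `μ(I) = 0`, so the entropy is a series over the atoms `⋂_{i<q} f^{-i} P_{s_i}`.
Each term converges: `μ` gives no mass to the boundary of an atom, because `f` is continuous
off the `μ`-null closed set `I`, so pulling back by `f` preserves null boundaries. It remains to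
make the tail of the series small for large `n`. An atom whose coordinates have levels
`n_0, …, n_{q-1}` (the `V`-sets containing them) gets the weight `a = (2k+2) ∑ (n_i + 1)`, and
`-p log p ≤ a p + e^{-a}`. The counting bound on `𝒫` makes `∑ e^{-a}` over the atoms with some
level `≥ T - 1` of order `e^{-T}`, and, as `-log η ≥ n` on `V_n`, `∑ a ν(atom)` over the same
atoms is at most a constant times `∫ (-log η - (T-1)/2)⁺ dν`. Finally `∫ log η dμ_n → ∫ log η dμ`
and the weak convergence of the continuous truncations `min (-log η) u` make these integrals
converge to the corresponding one for `μ`, which is small for large `T`.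
-/

namespace ENNReal

theorem tsum_pi_prod_le {ι κ : Type*} [Fintype ι] (g : ι → κ → ℝ≥0∞) :
    ∑' s : ι → κ, ∏ i, g i (s i) ≤ ∏ i, ∑' j, g i j := by
  classical
  rw [ENNReal.tsum_eq_iSup_sum]
  refine iSup_le fun F => ?_
  calc ∑ s ∈ F, ∏ i, g i (s i)
      ≤ ∑ s ∈ Fintype.piFinset fun i => F.image (· i), ∏ i, g i (s i) :=
        Finset.sum_le_sum_of_subset fun s hs =>
          Fintype.mem_piFinset.2 fun i => Finset.mem_image_of_mem _ hs
    _ = ∏ i, ∑ j ∈ F.image (· i), g i j := (Finset.prod_univ_sum _ _).symm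
    _ ≤ ∏ i, ∑' j, g i j := by gcongr; exact ENNReal.sum_le_tsum _

theorem tendsto_tsum_of_tendsto_of_tail_le {β : Type*} {a : ℕ → β → ℝ≥0∞} {b : β → ℝ≥0∞}
    (hab : ∀ s, Tendsto (fun n => a n s) atTop (𝓝 (b s)))
    (htail : ∀ ε > 0, ∃ F : Finset β, ∀ᶠ n in atTop, ∑' s : ↥(F : Set β)ᶜ, a n s ≤ ε) :
    Tendsto (fun n => ∑' s, a n s) atTop (𝓝 (∑' s, b s)) := by
  have hcore (F : Finset β) : Tendsto (fun n => ∑ s ∈ F, a n s) atTop (𝓝 (∑ s ∈ F, b s)) :=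
    tendsto_finsetSum F fun s _ => hab s
  refine tendsto_order.2 ⟨fun c hc => ?_, fun c hc => ?_⟩
  · obtain ⟨F, hF⟩ := lt_iSup_iff.1 (ENNReal.tsum_eq_iSup_sum (f := b) ▸ hc)
    filter_upwards [(hcore F).eventually_const_lt hF] with n hn
    exact hn.trans_le (ENNReal.sum_le_tsum F)
  · obtain ⟨r, hr, hrc⟩ := ENNReal.lt_iff_exists_add_pos_lt.1 hc
    have hr2 : (0 : ℝ≥0∞) < r / 2 := ENNReal.half_pos (by exact_mod_cast hr.ne')
    obtain ⟨F, hF⟩ := htail _ hr2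
    have hFb : ∑ s ∈ F, b s < ∑' s, b s + r / 2 :=
      (ENNReal.sum_le_tsum F).trans_lt (ENNReal.lt_add_right (ne_top_of_lt hc) hr2.ne')
    filter_upwards [(hcore F).eventually_lt_const hFb, hF] with n hn htn
    calc ∑' s, a n s = ∑ s ∈ F, a n s + ∑' s : ↥(F : Set β)ᶜ, a n s :=
          (ENNReal.sum_add_tsum_compl F _).symm
      _ < (∑' s, b s + r / 2) + r / 2 :=
          ENNReal.add_lt_add_of_lt_of_le
            (ne_top_of_le_ne_top (ENNReal.div_ne_top ENNReal.coe_ne_top two_ne_zero) htn) hn htn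
      _ = ∑' s, b s + r := by rw [add_assoc, ENNReal.add_halves]
      _ < c := hrc

theorem tendsto_toReal_tsum_of_tendsto_of_tail_le {β : Type*} {a : ℕ → β → ℝ≥0∞}
    {b : β → ℝ≥0∞} (hb : ∀ s, b s ≠ ∞)
    (hab : ∀ s, Tendsto (fun n => a n s) atTop (𝓝 (b s)))
    (htail : ∀ ε > 0, ∃ F : Finset β, ∀ᶠ n in atTop, ∑' s : ↥(F : Set β)ᶜ, a n s ≤ ε) :
    Tendsto (fun n => (∑' s, a n s).toReal) atTop (𝓝 (∑' s, b s).toReal) := by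
  have hlim := tendsto_tsum_of_tendsto_of_tail_le hab htail
  obtain ⟨F, hF⟩ := htail 1 one_pos
  have hfin : ∑' s, b s ≤ ∑ s ∈ F, b s + 1 := by
    refine le_of_tendsto_of_tendsto hlim ((tendsto_finsetSum F fun s _ => hab s).add_const 1) ?_
    filter_upwards [hF] with n hn
    rw [← ENNReal.sum_add_tsum_compl F]
    gcongr
  have hne : ∑ s ∈ F, b s + 1 ≠ ∞ := by simp [ENNReal.sum_ne_top.2 fun s _ => hb s]
  exact (ENNReal.tendsto_toReal (ne_top_of_le_ne_top hne hfin)).comp hlim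

theorem tsum_ofReal_exp_neg_one_pow_succ_le_one :
    ∑' m : ℕ, ENNReal.ofReal (Real.exp (-1)) ^ (m + 1) ≤ 1 := by
  have hr : ENNReal.ofReal (Real.exp (-1)) ≤ 2⁻¹ := by
    simpa [one_div, ENNReal.ofReal_inv_of_pos] using
      ENNReal.ofReal_le_ofReal Real.exp_neg_one_lt_half.le
  calc _ ≤ ∑' m : ℕ, (2⁻¹ : ℝ≥0∞) ^ (m + 1) := ENNReal.tsum_le_tsum fun m => by gcongr
    _ = 1 := by
      rw [ENNReal.tsum_geometric_add_one, ENNReal.one_sub_inv_two, inv_inv,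
        ENNReal.inv_mul_cancel two_ne_zero ENNReal.ofNat_ne_top]

end ENNReal

theorem Real.negMulLog_le_mul_add_exp {p : ℝ} (a : ℝ) (hp : 0 ≤ p) :
    negMulLog p ≤ a * p + exp (-(a + 1)) := by
  rcases hp.eq_or_lt with rfl | hp
  · simp [(exp_pos _).le]
  calc negMulLog p = a * p + p * ((-log p - a - 1) + 1) := by rw [negMulLog]; ring
    _ ≤ a * p + p * exp (-log p - a - 1) := by gcongr; exact add_one_le_exp _
    _ = a * p + exp (-(a + 1)) := by
      rw [show -log p - a - 1 = -(a + 1) + -log p by ring, exp_add, exp_neg (log p), exp_log hp]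
      field_simp

theorem ENNReal.ofReal_negMulLog_toReal_le {p : ℝ≥0∞} (hp : p ≠ ∞) {a : ℝ} (ha : 0 ≤ a) :
    ENNReal.ofReal (Real.negMulLog p.toReal) ≤
      ENNReal.ofReal a * p + ENNReal.ofReal (Real.exp (-a)) := by
  calc ENNReal.ofReal (Real.negMulLog p.toReal)
      ≤ ENNReal.ofReal (a * p.toReal + Real.exp (-(a + 1))) :=
        ENNReal.ofReal_le_ofReal (Real.negMulLog_le_mul_add_exp a ENNReal.toReal_nonneg)
    _ ≤ ENNReal.ofReal a * p + ENNReal.ofReal (Real.exp (-a)) := by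
      rw [ENNReal.ofReal_add (by positivity) (by positivity), ENNReal.ofReal_mul ha,
        ENNReal.ofReal_toReal hp]
      gcongr
      linarith

theorem tsum_mul_measure_le_of_subset {α β γ : Type*} [MeasurableSpace α] [Countable γ]
    {ν : Measure α} {A : γ → Set α} {B : β → Set α} (π : γ → β)
    (hAm : ∀ s, MeasurableSet (A s)) (hAd : Pairwise fun s t => Disjoint (A s) (A t))
    (hAB : ∀ s, A s ⊆ B (π s)) (c : β → ℝ≥0∞) :
    ∑' s, c (π s) * ν (A s) ≤ ∑' j, c j * ν (B j) := by
  rw [← ENNReal.tsum_fiberwise _ π]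
  refine ENNReal.tsum_le_tsum fun j => ?_
  have hπ (s : π ⁻¹' {j}) : π s = j := s.2
  simp_rw [hπ, ENNReal.tsum_mul_left]
  rw [← measure_iUnion (fun s t hst => hAd (Subtype.coe_injective.ne hst)) fun s => hAm s]
  gcongr
  exact iUnion_subset fun s => (hAB s).trans (by rw [hπ s])

theorem frontier_preimage_subset_compl_union {α β : Type*} [TopologicalSpace α]
    [TopologicalSpace β] {f : α → β} {U : Set α} (hU : IsOpen U) (hf : ContinuousOn f U)
    (S : Set β) : frontier (f ⁻¹' S) ⊆ Uᶜ ∪ f ⁻¹' frontier S := by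
  intro x hx
  by_cases hxU : x ∈ U
  · have hfx : ContinuousAt f x := hf.continuousAt (hU.mem_nhds hxU)
    refine Or.inr ⟨closure_mono (image_preimage_subset f S) (mem_closure_image hfx hx.1),
      fun hint => hx.2 ?_⟩
    exact mem_interior_iff_mem_nhds.2 <| mem_of_superset
      (hfx.preimage_mem_nhds (isOpen_interior.mem_nhds hint)) (preimage_mono interior_subset)
  · exact Or.inl hxU

theorem frontier_iInter_subset_of_finite {α ι : Type*} [TopologicalSpace α] [Finite ι]
    (s : ι → Set α) : frontier (⋂ i, s i) ⊆ ⋃ i, frontier (s i) := by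
  rintro x ⟨hcl, hint⟩
  rw [interior_iInter_of_finite, mem_iInter, not_forall] at hint
  obtain ⟨i, hi⟩ := hint
  exact mem_iUnion.2 ⟨i, closure_mono (iInter_subset s i) hcl, hi⟩

section Atoms

variable {α : Type*} {f : α → α} {I : Set α} {P : ℕ → Set α}

theorem dynOmega_subset_preimage_iterate (i : ℕ) : dynOmega f I ⊆ f^[i] ⁻¹' dynOmega f I :=
  fun x hx n => by rw [← Function.iterate_add_apply]; exact hx (n + i)

theorem pairwise_disjoint_refinedAtoms (hPd : Pairwise fun i j => Disjoint (P i) (P j))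
    (q : ℕ) : Pairwise fun s t => Disjoint (refinedAtoms f P q s) (refinedAtoms f P q t) := by
  intro s t hst
  obtain ⟨i, hi⟩ := Function.ne_iff.1 hst
  exact ((hPd hi).preimage _).mono (iInter_subset _ i) (iInter_subset _ i)

variable [MeasurableSpace α] {ν : Measure α}

theorem measurableSet_refinedAtoms (hf : Measurable f) (hPm : ∀ j, MeasurableSet (P j))
    {q : ℕ} (s : Fin q → ℕ) : MeasurableSet (refinedAtoms f P q s) :=
  MeasurableSet.iInter fun _ => hf.iterate _ (hPm _)

theorem measure_compl_dynOmega (hf : MeasurePreserving f ν ν) (hI : MeasurableSet I)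
    (hνI : ν I = 0) : ν (dynOmega f I)ᶜ = 0 := by
  have : (dynOmega f I)ᶜ = ⋃ n, f^[n] ⁻¹' I := by ext x; simp [dynOmega]
  rw [this]
  exact measure_iUnion_null fun n =>
    ((hf.iterate n).measure_preimage hI.nullMeasurableSet).trans hνI

theorem measure_refinedAtoms_inter_dynOmega (hf : MeasurePreserving f ν ν)
    (hI : MeasurableSet I) (hνI : ν I = 0) {q : ℕ} (s : Fin q → ℕ) :
    ν (refinedAtoms f (fun j => P j ∩ dynOmega f I) q s) = ν (refinedAtoms f P q s) := by
  refine le_antisymm (measure_mono (iInter_mono fun i => preimage_mono inter_subset_left)) ?_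
  rw [← measure_inter_conull (measure_compl_dynOmega hf hI hνI)]
  exact measure_mono fun x ⟨hx, hxΩ⟩ => mem_iInter.2 fun i =>
    ⟨mem_iInter.1 hx i, dynOmega_subset_preimage_iterate i hxΩ⟩

theorem partEntropy_refinedAtoms_inter_dynOmega (hf : MeasurePreserving f ν ν)
    (hI : MeasurableSet I) (hνI : ν I = 0) (q : ℕ) :
    partEntropy ν (refinedAtoms f (fun j => P j ∩ dynOmega f I) q) =
      partEntropy ν (refinedAtoms f P q) := by
  simp only [partEntropy, measure_refinedAtoms_inter_dynOmega hf hI hνI]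

theorem measure_frontier_preimage_iterate_eq_zero [TopologicalSpace α] [OpensMeasurableSpace α]
    (hI : IsClosed I) (hfc : ContinuousOn f Iᶜ) (hf : MeasurePreserving f ν ν) (hνI : ν I = 0)
    {S : Set α} (hS : ν (frontier S) = 0) (i : ℕ) : ν (frontier (f^[i] ⁻¹' S)) = 0 := by
  induction i with
  | zero => simpa using hS
  | succ i ih =>
    rw [Function.iterate_succ, preimage_comp]
    refine measure_mono_null (frontier_preimage_subset_compl_union hI.isOpen_compl hfc _) ?_
    rw [compl_compl]
    exact measure_union_null hνI
      ((hf.measure_preimage isClosed_frontier.measurableSet.nullMeasurableSet).trans ih)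

theorem tendsto_measure_refinedAtoms [TopologicalSpace α] [OpensMeasurableSpace α]
    [HasOuterApproxClosed α] (hI : IsClosed I) (hfc : ContinuousOn f Iᶜ)
    {μseq : ℕ → Measure α} {μ : Measure α} [∀ n, IsProbabilityMeasure (μseq n)]
    [IsProbabilityMeasure μ] (hμf : MeasurePreserving f μ μ) (hμI : μ I = 0)
    (hweak : ∀ g : C(α, ℝ),
      Tendsto (fun n => ∫ x, g x ∂(μseq n)) atTop (𝓝 (∫ x, g x ∂μ)))
    (hbd : ∀ j, μ (frontier (P j)) = 0) {q : ℕ} (s : Fin q → ℕ) :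
    Tendsto (fun n => μseq n (refinedAtoms f P q s)) atTop (𝓝 (μ (refinedAtoms f P q s))) := by
  let νseq : ℕ → ProbabilityMeasure α := fun n => ⟨μseq n, inferInstance⟩
  let ν : ProbabilityMeasure α := ⟨μ, inferInstance⟩
  have hconv : Tendsto νseq atTop (𝓝 ν) :=
    ProbabilityMeasure.tendsto_iff_forall_integral_tendsto.2 fun g => hweak g.toContinuousMap
  exact ProbabilityMeasure.tendsto_measure_of_null_frontier_of_tendsto' hconv <|
    measure_mono_null (frontier_iInter_subset_of_finite _) <| measure_iUnion_null fun i =>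
      measure_frontier_preimage_iterate_eq_zero hI hfc hμf hμI (hbd _) i

end Atoms

section NegLogTail

variable {α : Type*} [MeasurableSpace α] {η : α → ℝ} {ν : Measure α}

def negLogTail (η : α → ℝ) (ν : Measure α) (u : ℝ) : ℝ≥0∞ :=
  ∫⁻ x, ENNReal.ofReal (-Real.log (η x) - u) ∂ν

theorem tendsto_negLogTail_atTop (hη : Measurable η)
    (hint : Integrable (fun x => Real.log (η x)) ν) :
    Tendsto (negLogTail η ν) atTop (𝓝 0) := by
  have hlim := tendsto_lintegral_filter_of_dominated_convergence
    (fun x => ENNReal.ofReal (-Real.log (η x))) (l := atTop)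
    (F := fun u x => ENNReal.ofReal (-Real.log (η x) - u)) (f := 0)
    (Eventually.of_forall fun u => by fun_prop)
    ((eventually_ge_atTop 0).mono fun u hu => ae_of_all _ fun x =>
      ENNReal.ofReal_le_ofReal (by linarith))
    hint.neg.lintegral_lt_top.ne
    (ae_of_all _ fun x => tendsto_const_nhds.congr' <|
      (eventually_ge_atTop (-Real.log (η x))).mono fun u hu =>
        (ENNReal.ofReal_of_nonpos (by linarith)).symm)
  unfold negLogTail
  simpa only [Pi.zero_apply, lintegral_zero] using hlim

theorem negLogTail_eq_ofReal_integral [IsFiniteMeasure ν]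
    (hint : Integrable (fun x => Real.log (η x)) ν) (u : ℝ) :
    negLogTail η ν u =
      ENNReal.ofReal (∫ x, -Real.log (η x) ∂ν - ∫ x, min (-Real.log (η x)) u ∂ν) := by
  have hneg : Integrable (fun x => -Real.log (η x)) ν := hint.neg
  have hmin : Integrable (fun x => min (-Real.log (η x)) u) ν := hneg.inf (integrable_const u)
  rw [← integral_sub hneg hmin, ofReal_integral_eq_lintegral_ofReal
    (f := fun x => -Real.log (η x) - min (-Real.log (η x)) u) (hneg.sub hmin)
    (ae_of_all _ fun x => sub_nonneg.2 (min_le_left _ _)), negLogTail]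
  congr 1 with x
  rcases le_total (-Real.log (η x)) u with h | h
  · simp [min_eq_left h, ENNReal.ofReal_of_nonpos (sub_nonpos.2 h)]
  · simp [min_eq_right h]

theorem integral_min_neg_log_eq (hpos : ∀ᵐ x ∂ν, 0 < η x) (u : ℝ) :
    ∫ x, min (-Real.log (η x)) u ∂ν = ∫ x, -Real.log (max (η x) (Real.exp (-u))) ∂ν := by
  refine integral_congr_ae (hpos.mono fun x hx => ?_)
  show min _ u = -Real.log (max (η x) _)
  rcases le_total (Real.exp (-u)) (η x) with h | h
  · rw [max_eq_left h, min_eq_left]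
    linarith [(Real.le_log_iff_exp_le hx).2 h]
  · rw [max_eq_right h, Real.log_exp, neg_neg, min_eq_right]
    linarith [(Real.log_le_iff_le_exp hx).2 h]

theorem tendsto_negLogTail [TopologicalSpace α] (hηc : Continuous η)
    {μseq : ℕ → Measure α} {μ : Measure α} [∀ n, IsFiniteMeasure (μseq n)] [IsFiniteMeasure μ]
    (hweak : ∀ g : C(α, ℝ),
      Tendsto (fun n => ∫ x, g x ∂(μseq n)) atTop (𝓝 (∫ x, g x ∂μ)))
    (hint : ∀ n, Integrable (fun x => Real.log (η x)) (μseq n))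
    (hpos : ∀ n, ∀ᵐ x ∂(μseq n), 0 < η x)
    (hintμ : Integrable (fun x => Real.log (η x)) μ) (hposμ : ∀ᵐ x ∂μ, 0 < η x)
    (hlim : Tendsto (fun n => ∫ x, Real.log (η x) ∂(μseq n)) atTop
      (𝓝 (∫ x, Real.log (η x) ∂μ))) (u : ℝ) :
    Tendsto (fun n => negLogTail η (μseq n) u) atTop (𝓝 (negLogTail η μ u)) := by
  let g : C(α, ℝ) := ⟨fun x => -Real.log (max (η x) (Real.exp (-u))),
    (hηc.max continuous_const).log (fun x => (lt_max_of_lt_right (Real.exp_pos _)).ne') |>.neg⟩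
  have hneg : Tendsto (fun n => ∫ x, -Real.log (η x) ∂(μseq n)) atTop
      (𝓝 (∫ x, -Real.log (η x) ∂μ)) := by
    simpa only [integral_neg] using hlim.neg
  simp only [negLogTail_eq_ofReal_integral (hint _), negLogTail_eq_ofReal_integral hintμ,
    integral_min_neg_log_eq (hpos _), integral_min_neg_log_eq hposμ]
  exact ENNReal.tendsto_ofReal (hneg.sub (hweak g))

theorem exists_eventually_lt_of_tendsto_negLogTail {μseq : ℕ → Measure α} {μ : Measure α}
    {K₁ K₂ : ℝ≥0∞} (hK₁ : K₁ ≠ ∞) (hK₂ : K₂ ≠ ∞) (h0 : Tendsto (negLogTail η μ) atTop (𝓝 0))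
    (hn : ∀ u, Tendsto (fun n => negLogTail η (μseq n) u) atTop (𝓝 (negLogTail η μ u)))
    {ε : ℝ≥0∞} (hε : 0 < ε) :
    ∃ T : ℕ, 2 ≤ T ∧ ∀ᶠ n in atTop,
      K₁ * negLogTail η (μseq n) ((T - 1) / 2) + K₂ * ENNReal.ofReal (Real.exp (-T)) < ε := by
  have hu : Tendsto (fun T : ℕ => ((T : ℝ) - 1) / 2) atTop atTop :=
    (tendsto_atTop_add_const_right _ (-1) tendsto_natCast_atTop_atTop).atTop_div_const two_pos
  have hexp : Tendsto (fun T : ℕ => ENNReal.ofReal (Real.exp (-T))) atTop (𝓝 0) := by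
    simpa using ENNReal.tendsto_ofReal
      (Real.tendsto_exp_neg_atTop_nhds_zero.comp tendsto_natCast_atTop_atTop)
  have hbound : Tendsto (fun T : ℕ => K₁ * negLogTail η μ ((T - 1) / 2) +
      K₂ * ENNReal.ofReal (Real.exp (-T))) atTop (𝓝 0) := by
    simpa using (ENNReal.Tendsto.const_mul (h0.comp hu) (Or.inr hK₁)).add
      (ENNReal.Tendsto.const_mul hexp (Or.inr hK₂))
  obtain ⟨T, hT, hT2⟩ := ((hbound.eventually (gt_mem_nhds hε)).and (eventually_ge_atTop 2)).exists
  exact ⟨T, hT2, ((ENNReal.Tendsto.const_mul (hn _) (Or.inr hK₁)).add_const _).eventually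
    (gt_mem_nhds hT)⟩

end NegLogTail

section Levels

variable {α : Type*} (P : ℕ → Set α) (lev : ℕ → ℕ)

open Classical in
/-- The exponent `2k+2` beats the at most `C e^{2k(n+1)}` atoms of level `n`, leaving the summable
`C e^{-2(n+1)}`. -/
def atomWeight (k t j : ℕ) : ℝ≥0∞ :=
  if (P j).Nonempty ∧ t ≤ lev j + 1 then
    ENNReal.ofReal (Real.exp (-((2 * k + 2) * (lev j + 1 : ℝ)))) else 0

def levelAbove (T j : ℕ) : ℕ := if T ≤ lev j + 1 then lev j + 1 else 0

def lowLevelIndices (q T : ℕ) : Set (Fin q → ℕ) :=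
  Set.pi univ fun _ => {j | (P j).Nonempty ∧ lev j + 1 < T}

variable {P lev} {η : α → ℝ}

theorem finite_lowLevelIndices (hlev : ∀ j, (P j).Nonempty → P j ⊆ Vset η (lev j))
    (hJ : ∀ m : ℕ, {i | (P i).Nonempty ∧ P i ⊆ Vset η m}.Finite) (q T : ℕ) :
    (lowLevelIndices P lev q T).Finite :=
  Set.Finite.pi fun _ => ((Set.finite_lt_nat T).biUnion fun m _ => hJ m).subset
    fun j ⟨hne, hlt⟩ => mem_biUnion (show lev j < T by omega) ⟨hne, hlev j hne⟩

theorem tsum_atomWeight_le {k : ℕ} {C : ℝ} (hC : 0 ≤ C)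
    (hlev : ∀ j, (P j).Nonempty → P j ⊆ Vset η (lev j))
    (hJ : ∀ m : ℕ, {i | (P i).Nonempty ∧ P i ⊆ Vset η m}.Finite ∧
      (({i | (P i).Nonempty ∧ P i ⊆ Vset η m}.ncard : ℝ) ≤ C * Real.exp (2 * k * (m + 1 : ℝ))))
    (t : ℕ) :
    ∑' j, atomWeight P lev k t j ≤ ENNReal.ofReal C * ENNReal.ofReal (Real.exp (-t)) := by
  set J := fun m => {i | (P i).Nonempty ∧ P i ⊆ Vset η m}
  set v : ℕ → ℝ≥0∞ := fun m =>
    if t ≤ m + 1 then ENNReal.ofReal (Real.exp (-((2 * k + 2) * (m + 1 : ℝ)))) else 0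
  have hw (j : ℕ) : atomWeight P lev k t j ≤ ∑' m, (J m).indicator (fun _ => v m) j := by
    unfold atomWeight
    split_ifs with h
    · refine le_trans (le_of_eq ?_) (ENNReal.le_tsum (lev j))
      rw [indicator_of_mem (show j ∈ J (lev j) from ⟨h.1, hlev j h.1⟩)]
      simp [v, h.2]
    · exact zero_le
  have hv (m : ℕ) : (J m).encard * v m ≤ ENNReal.ofReal C * ENNReal.ofReal (Real.exp (-t)) *
      ENNReal.ofReal (Real.exp (-1)) ^ (m + 1) := by
    simp only [v]
    split_ifs with htm
    · rw [← (hJ m).1.cast_ncard_eq, ENat.toENNReal_coe, ← ENNReal.ofReal_natCast,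
        ← ENNReal.ofReal_mul (by positivity), ← ENNReal.ofReal_pow (Real.exp_nonneg _),
        ← ENNReal.ofReal_mul hC, ← ENNReal.ofReal_mul (by positivity)]
      refine ENNReal.ofReal_le_ofReal ?_
      have htm' : (t : ℝ) ≤ m + 1 := by exact_mod_cast htm
      calc _ ≤ C * Real.exp (2 * k * (m + 1 : ℝ)) * Real.exp (-((2 * k + 2) * (m + 1 : ℝ))) := by
            gcongr; exact (hJ m).2
        _ = C * Real.exp (-(2 * (m + 1 : ℝ))) := by rw [mul_assoc, ← Real.exp_add]; ring_nf
        _ ≤ C * Real.exp (-t) * Real.exp (-1) ^ (m + 1) := by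
            rw [← Real.exp_nat_mul, mul_assoc, ← Real.exp_add]
            gcongr
            push_cast
            linarith
    · simp
  calc ∑' j, atomWeight P lev k t j ≤ ∑' j, ∑' m, (J m).indicator (fun _ => v m) j :=
        ENNReal.tsum_le_tsum hw
    _ = ∑' m, (J m).encard * v m := by
        rw [ENNReal.tsum_comm]
        congr 1 with m
        rw [← tsum_subtype, ENNReal.tsum_set_const]
    _ ≤ ∑' m : ℕ, ENNReal.ofReal C * ENNReal.ofReal (Real.exp (-t)) *
          ENNReal.ofReal (Real.exp (-1)) ^ (m + 1) := ENNReal.tsum_le_tsum hv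
    _ ≤ ENNReal.ofReal C * ENNReal.ofReal (Real.exp (-t)) := by
        rw [ENNReal.tsum_mul_left]
        exact mul_le_of_le_one_right' ENNReal.tsum_ofReal_exp_neg_one_pow_succ_le_one

theorem natCast_add_one_le_of_mem_Vset {n T : ℕ} {x : α} (hx : x ∈ Vset η n)
    (hT : 2 ≤ T) (hTn : T ≤ n + 1) :
    ((n + 1 : ℕ) : ℝ≥0∞) ≤ 4 * ENNReal.ofReal (-Real.log (η x) - (T - 1) / 2) := by
  have hpos : 0 < η x := (Real.exp_pos _).trans hx.1
  have hlog : Real.log (η x) ≤ -n := (Real.log_le_iff_le_exp hpos).2 hx.2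
  have hT' : (2 : ℝ) ≤ T := by exact_mod_cast hT
  have hTn' : (T : ℝ) ≤ n + 1 := by exact_mod_cast hTn
  rw [← ENNReal.ofReal_natCast, ← ENNReal.ofReal_ofNat, ← ENNReal.ofReal_mul (by norm_num)]
  exact ENNReal.ofReal_le_ofReal (by push_cast; linarith)

theorem tsum_levelAbove_mul_measure_le [MeasurableSpace α] {ν : Measure α}
    (hPm : ∀ j, MeasurableSet (P j)) (hPd : Pairwise fun i j => Disjoint (P i) (P j))
    (hlev : ∀ j, (P j).Nonempty → P j ⊆ Vset η (lev j)) {T : ℕ} (hT : 2 ≤ T) :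
    ∑' j, (levelAbove lev T j : ℝ≥0∞) * ν (P j) ≤ 4 * negLogTail η ν ((T - 1) / 2) := by
  set g : α → ℝ≥0∞ := fun x => 4 * ENNReal.ofReal (-Real.log (η x) - (T - 1) / 2)
  have hj (j : ℕ) : (levelAbove lev T j : ℝ≥0∞) * ν (P j) ≤ ∫⁻ x in P j, g x ∂ν := by
    rcases (P j).eq_empty_or_nonempty with h | h
    · simp [h]
    unfold levelAbove
    split_ifs with hTj
    · rw [← setLIntegral_const]
      exact setLIntegral_mono' (hPm j) fun x hx =>
        natCast_add_one_le_of_mem_Vset (hlev j h hx) hT hTj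
    · simp
  calc _ ≤ ∑' j, ∫⁻ x in P j, g x ∂ν := ENNReal.tsum_le_tsum hj
    _ = ∫⁻ x in ⋃ j, P j, g x ∂ν := (lintegral_iUnion hPm hPd _).symm
    _ ≤ ∫⁻ x, g x ∂ν := setLIntegral_le_lintegral _ _
    _ = 4 * negLogTail η ν ((T - 1) / 2) := lintegral_const_mul' _ _ (by simp)

theorem sum_add_one_le_mul_sum_levelAbove {q T : ℕ} {s : Fin q → ℕ} {i₀ : Fin q}
    (hi₀ : T ≤ lev (s i₀) + 1) :
    ∑ i, (lev (s i) + 1) ≤ q * ∑ i, levelAbove lev T (s i) := by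
  have hsingle (i : Fin q) : levelAbove lev T (s i) ≤ ∑ i', levelAbove lev T (s i') :=
    Finset.single_le_sum (f := fun i' => levelAbove lev T (s i')) (fun _ _ => zero_le)
      (Finset.mem_univ i)
  have hle (i : Fin q) : lev (s i) + 1 ≤ ∑ i', levelAbove lev T (s i') := by
    by_cases h : T ≤ lev (s i) + 1
    · simpa [levelAbove, h] using hsingle i
    · have := hsingle i₀
      simp only [levelAbove, if_pos hi₀] at this ⊢
      omega
  simpa using Finset.sum_le_sum fun i (_ : i ∈ Finset.univ) => hle i

theorem prod_atomWeight_eq {k q T : ℕ} {s : Fin q → ℕ} (hne : ∀ i, (P (s i)).Nonempty)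
    {i₀ : Fin q} (hi₀ : T ≤ lev (s i₀) + 1) :
    ∏ i, atomWeight P lev k (if i = i₀ then T else 0) (s i) =
      ENNReal.ofReal (Real.exp (-(((2 * k + 2) * ∑ i, (lev (s i) + 1) : ℕ) : ℝ))) := by
  have hw (i : Fin q) : atomWeight P lev k (if i = i₀ then T else 0) (s i) =
      ENNReal.ofReal (Real.exp (-((2 * k + 2) * (lev (s i) + 1 : ℝ)))) :=
    if_pos ⟨hne i, by split_ifs with h <;> [exact h ▸ hi₀; exact Nat.zero_le _]⟩
  rw [Finset.prod_congr rfl fun i _ => hw i,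
    ← ENNReal.ofReal_prod_of_nonneg fun _ _ => (Real.exp_pos _).le, ← Real.exp_sum]
  simp [Finset.mul_sum]

theorem ofReal_negMulLog_measure_refinedAtoms_le [MeasurableSpace α] {ν : Measure α}
    [IsFiniteMeasure ν] (f : α → α) {k q T : ℕ} {s : Fin q → ℕ}
    (hs : s ∉ lowLevelIndices P lev q T) :
    ENNReal.ofReal (Real.negMulLog (ν (refinedAtoms f P q s)).toReal) ≤
      ((2 * k + 2) * q : ℝ≥0∞) * (∑ i, (levelAbove lev T (s i) : ℝ≥0∞)) *
          ν (refinedAtoms f P q s) +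
        ∑ i₀, ∏ i, atomWeight P lev k (if i = i₀ then T else 0) (s i) := by
  by_cases hne : ∀ i, (P (s i)).Nonempty
  swap
  · obtain ⟨i, hi⟩ := not_forall.1 hne
    have : refinedAtoms f P q s = ∅ := subset_empty_iff.1 <|
      (iInter_subset _ i).trans (by simp [not_nonempty_iff_eq_empty.1 hi])
    simp [this]
  obtain ⟨i₀, hi₀⟩ : ∃ i₀, T ≤ lev (s i₀) + 1 := by
    simp only [lowLevelIndices, mem_univ_pi, mem_ofPred_eq, not_forall, not_and, not_lt] at hs
    obtain ⟨i, hi⟩ := hs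
    exact ⟨i, hi (hne i)⟩
  have hK : (((2 * k + 2) * ∑ i, (lev (s i) + 1) : ℕ) : ℝ≥0∞) ≤
      ((2 * k + 2) * q : ℝ≥0∞) * ∑ i, (levelAbove lev T (s i) : ℝ≥0∞) := by
    have h := (Nat.cast_le (α := ℝ≥0∞)).2
      (Nat.mul_le_mul_left (2 * k + 2) (sum_add_one_le_mul_sum_levelAbove hi₀))
    push_cast at h ⊢
    rwa [mul_assoc]
  calc _ ≤ ENNReal.ofReal ((2 * k + 2) * ∑ i, (lev (s i) + 1) : ℕ) * ν (refinedAtoms f P q s) +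
        ENNReal.ofReal (Real.exp (-((2 * k + 2) * ∑ i, (lev (s i) + 1) : ℕ))) :=
      ENNReal.ofReal_negMulLog_toReal_le (measure_ne_top _ _) (Nat.cast_nonneg _)
    _ ≤ _ := by
      rw [ENNReal.ofReal_natCast, ← prod_atomWeight_eq hne hi₀]
      gcongr
      exact Finset.single_le_sum (f := fun i₀ => ∏ i, atomWeight P lev k
        (if i = i₀ then T else 0) (s i)) (fun _ _ => zero_le) (Finset.mem_univ i₀)

theorem tsum_compl_lowLevelIndices_le [MeasurableSpace α] {ν : Measure α} [IsFiniteMeasure ν]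
    {f : α → α} (hf : MeasurePreserving f ν ν) {k : ℕ} {C : ℝ} (hC : 0 ≤ C)
    (hPm : ∀ j, MeasurableSet (P j)) (hPd : Pairwise fun i j => Disjoint (P i) (P j))
    (hlev : ∀ j, (P j).Nonempty → P j ⊆ Vset η (lev j))
    (hJ : ∀ m : ℕ, {i | (P i).Nonempty ∧ P i ⊆ Vset η m}.Finite ∧
      (({i | (P i).Nonempty ∧ P i ⊆ Vset η m}.ncard : ℝ) ≤ C * Real.exp (2 * k * (m + 1 : ℝ))))
    {q T : ℕ} (hT : 2 ≤ T) :
    ∑' s : ↥(lowLevelIndices P lev q T)ᶜ,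
        ENNReal.ofReal (Real.negMulLog (ν (refinedAtoms f P q s)).toReal) ≤
      ((2 * k + 2) * q * q * 4 : ℝ≥0∞) * negLogTail η ν ((T - 1) / 2) +
        q * ENNReal.ofReal C ^ q * ENNReal.ofReal (Real.exp (-T)) := by
  set A := refinedAtoms f P q
  have hcoord (i : Fin q) :
      ∑' s, (levelAbove lev T (s i) : ℝ≥0∞) * ν (A s) ≤ 4 * negLogTail η ν ((T - 1) / 2) :=
    calc _ ≤ ∑' j, (levelAbove lev T j : ℝ≥0∞) * ν (f^[i] ⁻¹' P j) :=
          tsum_mul_measure_le_of_subset (· i) (measurableSet_refinedAtoms hf.measurable hPm)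
            (pairwise_disjoint_refinedAtoms hPd q) (fun _ => iInter_subset _ i) _
      _ = ∑' j, (levelAbove lev T j : ℝ≥0∞) * ν (P j) := by
          simp_rw [(hf.iterate i).measure_preimage (hPm _).nullMeasurableSet]
      _ ≤ _ := tsum_levelAbove_mul_measure_le hPm hPd hlev hT
  have hweight (i₀ : Fin q) :
      ∑' s : Fin q → ℕ, ∏ i, atomWeight P lev k (if i = i₀ then T else 0) (s i) ≤
        ENNReal.ofReal C ^ q * ENNReal.ofReal (Real.exp (-T)) :=
    calc _ ≤ ∏ i, ∑' j, atomWeight P lev k (if i = i₀ then T else 0) j :=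
          ENNReal.tsum_pi_prod_le _
      _ ≤ ∏ i : Fin q, ENNReal.ofReal C *
            ENNReal.ofReal (Real.exp (-((if i = i₀ then T else 0 : ℕ) : ℝ))) :=
          Finset.prod_le_prod' fun i _ => tsum_atomWeight_le hC hlev hJ _
      _ = _ := by
          rw [Finset.prod_mul_distrib, Finset.prod_const, Finset.card_univ, Fintype.card_fin]
          congr 1
          simp [apply_ite]
  calc _ ≤ ∑' s, (((2 * k + 2) * q : ℝ≥0∞) * (∑ i, (levelAbove lev T (s i) : ℝ≥0∞)) *
          ν (A s) + ∑ i₀, ∏ i, atomWeight P lev k (if i = i₀ then T else 0) (s i)) :=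
        (ENNReal.tsum_le_tsum fun s => ofReal_negMulLog_measure_refinedAtoms_le f s.2).trans
          (ENNReal.tsum_comp_le_tsum_of_injective Subtype.val_injective _)
    _ = ((2 * k + 2) * q : ℝ≥0∞) * ∑ i, ∑' s, (levelAbove lev T (s i) : ℝ≥0∞) * ν (A s) +
          ∑ i₀, ∑' s : Fin q → ℕ, ∏ i, atomWeight P lev k (if i = i₀ then T else 0) (s i) := by
        simp_rw [ENNReal.tsum_add, mul_assoc, Finset.sum_mul, ENNReal.tsum_mul_left,
          Summable.tsum_finsetSum fun _ _ => ENNReal.summable]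
    _ ≤ ((2 * k + 2) * q : ℝ≥0∞) * ∑ _i : Fin q, 4 * negLogTail η ν ((T - 1) / 2) +
          ∑ _i₀ : Fin q, ENNReal.ofReal C ^ q * ENNReal.ofReal (Real.exp (-T)) := by
        gcongr with i _ i₀ _
        exacts [hcoord i, hweight i₀]
    _ = _ := by
        simp only [Finset.sum_const, Finset.card_univ, Fintype.card_fin, nsmul_eq_mul]
        ring

end Levels

theorem entropy_of_refined_partition_continuous_general
    (k : ℕ) (f : X → X) (I : Set X) (hI : IsClosed I)
    (hf : Measurable f) (hfc : ContinuousOn f Iᶜ)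
    (η : X → ℝ) (hηc : Continuous η) (hη01 : ∀ x, η x ∈ Icc (0 : ℝ) 1)
    (P : ℕ → Set X) (hP : IsManePartition k η P)
    (μseq : ℕ → Measure X) (μ : Measure X)
    (hμseq : ∀ n, MemM f I (μseq n)) (hμ : MemM f I μ)
    (hweak : ∀ g : C(X, ℝ),
      Tendsto (fun n => ∫ x, g x ∂(μseq n)) atTop (𝓝 (∫ x, g x ∂μ)))
    (hint : ∀ n, Integrable (fun x => Real.log (η x)) (μseq n))
    (hzero : ∀ n, (μseq n) {x | η x = 0} = 0)
    (hintμ : Integrable (fun x => Real.log (η x)) μ)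
    (hzeroμ : μ {x | η x = 0} = 0)
    (hlim : Tendsto (fun n => ∫ x, Real.log (η x) ∂(μseq n)) atTop
      (𝓝 (∫ x, Real.log (η x) ∂μ)))
    (hbd : ∀ i, μ (frontier (P i)) = 0)
    (q : ℕ) :
    Tendsto
      (fun n => (partEntropy (μseq n)
        (refinedAtoms f (fun i => P i ∩ dynOmega f I) q)).toReal) atTop
      (𝓝 ((partEntropy μ
        (refinedAtoms f (fun i => P i ∩ dynOmega f I) q)).toReal)) := by
  have := hμ.1
  have := fun n => (hμseq n).1
  obtain ⟨⟨hPm, hPd, -⟩, hPV, C, hC, hJ⟩ := hP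
  choose! lev hlev _ using hPV
  have hpres {ν : Measure X} (hν : MemM f I ν) : MeasurePreserving f ν ν := ⟨hf, hν.2.2⟩
  have hpos {ν : Measure X} (hν : ν {x | η x = 0} = 0) : ∀ᵐ x ∂ν, 0 < η x :=
    (measure_eq_zero_iff_ae_notMem.1 hν).mono fun x hx => (hη01 x).1.lt_of_ne' hx
  simp only [partEntropy_refinedAtoms_inter_dynOmega (hpres (hμseq _)) hI.measurableSet
    (hμseq _).2.1, partEntropy_refinedAtoms_inter_dynOmega (hpres hμ) hI.measurableSet hμ.2.1]
  refine ENNReal.tendsto_toReal_tsum_of_tendsto_of_tail_le (fun _ => ENNReal.ofReal_ne_top)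
    (fun s => ?_) fun ε hε => ?_
  · exact ((ENNReal.continuous_ofReal.comp Real.continuous_negMulLog).tendsto _).comp <|
      (ENNReal.tendsto_toReal (measure_ne_top _ _)).comp <|
        tendsto_measure_refinedAtoms hI hfc (hpres hμ) hμ.2.1 hweak hbd s
  obtain ⟨T, hT, hTn⟩ := exists_eventually_lt_of_tendsto_negLogTail
    (K₁ := (2 * k + 2) * q * q * 4) (K₂ := q * ENNReal.ofReal C ^ q) (by finiteness)
    (by finiteness) (tendsto_negLogTail_atTop hηc.measurable hintμ)
    (tendsto_negLogTail hηc hweak hint (fun n => hpos (hzero n)) hintμ (hpos hzeroμ) hlim) hε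
  refine ⟨(finite_lowLevelIndices hlev (fun m => (hJ m).1) q T).toFinset,
    hTn.mono fun n hn => ?_⟩
  rw [Set.Finite.coe_toFinset]
  exact (tsum_compl_lowLevelIndices_le (hpres (hμseq n)) hC.le hPm hPd hlev hJ hT).trans hn.le

/-- **Proposition (continuity of refined partition entropies).** Let `(μ_n)` be a sequence
of `𝓜` converging weakly to `μ ∈ 𝓜` with `lim_n ∫ log η dμ_n = ∫ log η dμ > -∞`
(the condition `> -∞` is encoded as integrability of `log ∘ η` together with
`ν{η = 0} = 0`). If `μ` gives no mass to the boundaries of the atoms of the Mané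
partition `𝒫`, then for every `q ≥ 1`,
`lim_n H_{μ_n}(⋁_{i=0}^{q-1} f^{-i}𝒫) = H_μ(⋁_{i=0}^{q-1} f^{-i}𝒫)`,
where `𝒫` is restricted to `Ω`. -/
theorem entropy_of_refined_partition_continuous
    (k : ℕ) (f : X → X) (I : Set X) (hI : IsClosed I)
    (hf : Measurable f) (hfc : ContinuousOn f Iᶜ)
    (η : X → ℝ) (hηc : Continuous η) (hη01 : ∀ x, η x ∈ Icc (0 : ℝ) 1)
    (hηI : ∀ x ∈ I, η x = 0)
    (P : ℕ → Set X) (hP : IsManePartition k η P)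
    (μseq : ℕ → Measure X) (μ : Measure X)
    (hμseq : ∀ n, MemM f I (μseq n)) (hμ : MemM f I μ)
    (hweak : ∀ g : C(X, ℝ),
      Tendsto (fun n => ∫ x, g x ∂(μseq n)) atTop (𝓝 (∫ x, g x ∂μ)))
    (hint : ∀ n, Integrable (fun x => Real.log (η x)) (μseq n))
    (hzero : ∀ n, (μseq n) {x | η x = 0} = 0)
    (hintμ : Integrable (fun x => Real.log (η x)) μ)
    (hzeroμ : μ {x | η x = 0} = 0)
    (hlim : Tendsto (fun n => ∫ x, Real.log (η x) ∂(μseq n)) atTop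
      (𝓝 (∫ x, Real.log (η x) ∂μ)))
    (hbd : ∀ i, μ (frontier (P i)) = 0)
    (q : ℕ) (hq : 1 ≤ q) :
    Tendsto
      (fun n => (partEntropy (μseq n)
        (refinedAtoms f (fun i => P i ∩ dynOmega f I) q)).toReal) atTop
      (𝓝 ((partEntropy μ
        (refinedAtoms f (fun i => P i ∩ dynOmega f I) q)).toReal)) :=
  entropy_of_refined_partition_continuous_general k f I hI hf hfc η hηc hη01 P hP μseq μ hμseq hμ
    hweak hint hzero hintμ hzeroμ hlim hbd q
end
end

section
/- Let k₁, k₂ ≥ 0 with k = k₁ + k₂, let A : ℂ^{k₁} → ℂ^{k₁} and B : ℂ^{k₂} → ℂ^{k₂} be linear maps with A invertible and ‖B‖ < ‖A^{−1}‖^{−1}, and set ξ = 1 − ‖B‖‖A^{−1}‖ ∈ (0,1]. Let 0 ≤ ξ₀ ≤ 1, ε > 0 and 0 < δ < 2ε satisfy: ξ₀(1−ξ) + 2δ(1+ξ₀)‖A^{−1}‖ ≤ 1; (ξ₀‖B‖ + δ(1+ξ₀))(‖A^{−1}‖^{−1} − δ(1+ξ₀))^{−1} ≤ ξ₀; (‖B‖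 + 2δ)e^{−2ε} + δ ≤ 1; and δ(1+ξ₀) ≤ min{(‖A^{−1}‖^{−1} − ξ₀‖B‖)/2, ‖A^{−1}‖^{−1} − 1}. Let R₀ ≤ R₁ and let g : B_k(0,R₀) → B_k(0,R₁) be holomorphic with g(0) = 0, Dg(0) = (A,B) (block diagonal with respect to ℂ^k = ℂ^{k₁} × ℂ^{k₂}), and ‖Dg(w) − Dg(0)‖ ≤ δ for all w ∈ B_k(0,R₀). If φ : B_{k₂}(0,R) → ℂ^{k₁} satisfies ‖φ(0)‖ ≤ R' and Lip(φ) ≤ ξ₀ for some R' ≤ R ≤ R₀/2, then there exists ψ : B_{k₂}(0, Re^{−2ε}) → ℂ^{k₁} with Lip(ψ) ≤ ξ₀, ‖ψ(0)‖ ≤ R', and g(graph(ψ)) ⊆ graph(φ). -/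
open Metric Set
open scoped NNReal

/-!
Write `g = (A × B) + h` where, by the mean value inequality, `h` is `δ`-Lipschitz on `B_k(0, R₀)`.
For fixed `y`, the points `x` with `g (x, y) ∈ graph φ` are the fixed points of
`x ↦ x - A⁻¹ ((g (x, y)).1 - φ (g (x, y)).2)`, which maps the ball of radius `R' + ξ₀ ‖y‖` into
itself and contracts it with constant `κ = ‖A⁻¹‖ δ (1 + ξ₀) < 1`; its fixed point is `ψ y`.
Comparing the fixed-point equations at `y` and `y'` gives
`‖ψ y - ψ y'‖ ≤ κ (‖ψ y - ψ y'‖ + ‖y - y'‖) + ‖A⁻¹‖ ξ₀ ‖B‖ ‖y - y'‖`, and the hypothesis on the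
constants turns this into `Lip ψ ≤ ξ₀`.
-/

theorem mul_one_add_le_one_of_le_inv_sub_one {a c : ℝ} (ha : 0 ≤ a) (hc : c ≤ a⁻¹ - 1) :
    a * (1 + c) ≤ 1 :=
  (mul_le_mul_of_nonneg_left (by linarith) ha).trans mul_inv_le_one

theorem mul_lt_one_of_mul_one_add_le_one {a c : ℝ} (ha : 0 ≤ a) (h : a * (1 + c) ≤ 1) :
    a * c < 1 := by
  rcases ha.eq_or_lt with rfl | ha <;> nlinarith

theorem mul_le_mul_one_sub_of_mul_inv_sub_le {a c s ξ : ℝ} (ha : 0 ≤ a) (hc : c ≤ a⁻¹ - 1)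
    (hξ : 0 ≤ ξ) (h : s * (a⁻¹ - c)⁻¹ ≤ ξ) : a * s ≤ ξ * (1 - a * c) := by
  have hs : s ≤ ξ * (a⁻¹ - c) := (mul_inv_le_iff₀ (by linarith)).mp h
  calc a * s ≤ a * (ξ * (a⁻¹ - c)) := mul_le_mul_of_nonneg_left hs ha
    _ = ξ * (a * a⁻¹ - a * c) := by ring
    _ ≤ ξ * (1 - a * c) := by gcongr; exact mul_inv_le_one

theorem exists_isFixedPt_of_lipschitzOnWith {α : Type*} [MetricSpace α] {f : α → α} {s : Set α}
    {K : ℝ≥0} (hs : IsComplete s) (hne : s.Nonempty) (hsf : MapsTo f s s) (hK : K < 1)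
    (hf : LipschitzOnWith K f s) : ∃ x ∈ s, Function.IsFixedPt f x := by
  obtain ⟨x₀, hx₀⟩ := hne
  obtain ⟨x, hx, hfix, -⟩ :=
    ContractingWith.exists_fixedPoint' hs hsf ⟨hK, hf.mapsToRestrict hsf⟩ hx₀ (edist_ne_top _ _)
  exact ⟨x, hx, hfix⟩

theorem le_mul_of_le_mul_add {d e κ c ξ : ℝ} (he : 0 ≤ e) (hκ : κ < 1)
    (hc : κ + c ≤ ξ * (1 - κ)) (hd : d ≤ κ * (d + e) + c * e) : d ≤ ξ * e := by
  have : d * (1 - κ) ≤ ξ * e * (1 - κ) := by nlinarith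
  exact le_of_mul_le_mul_right this (by linarith)

section GraphTransform

variable {𝕜 E F : Type*} [NontriviallyNormedField 𝕜] [NormedAddCommGroup E] [NormedSpace 𝕜 E]
  {A : E ≃L[𝕜] E} {g : E × F → E × F} {φ : F → E}

def graphTransformStep (A : E ≃L[𝕜] E) (g : E × F → E × F) (φ : F → E) (u : E × F) : E :=
  u.1 - A.symm ((g u).1 - φ (g u).2)

theorem graphTransformStep_eq_self_iff {u : E × F} :
    graphTransformStep A g φ u = u.1 ↔ (g u).1 = φ (g u).2 := by
  simp [graphTransformStep, sub_eq_zero]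

variable [NormedAddCommGroup F] [NormedSpace 𝕜 F] {B : F →L[𝕜] F} {a b δ ξ₀ R₀ R R' r : ℝ}

theorem norm_snd_image_sub_le (hB : ‖B‖ ≤ b)
    (hg : ∀ u ∈ ball (0 : E × F) R₀, ∀ v ∈ ball (0 : E × F) R₀,
      ‖g u - g v - (A : E →L[𝕜] E).prodMap B (u - v)‖ ≤ δ * ‖u - v‖)
    {u v : E × F} (hu : u ∈ ball 0 R₀) (hv : v ∈ ball 0 R₀) :
    ‖(g u).2 - (g v).2‖ ≤ b * ‖u.2 - v.2‖ + δ * ‖u - v‖ := by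
  have hsplit : (g u).2 - (g v).2 =
      B (u.2 - v.2) + (g u - g v - (A : E →L[𝕜] E).prodMap B (u - v)).2 := by
    simp
  calc ‖(g u).2 - (g v).2‖
      ≤ ‖B (u.2 - v.2)‖ + ‖(g u - g v - (A : E →L[𝕜] E).prodMap B (u - v)).2‖ :=
        hsplit ▸ norm_add_le _ _
    _ ≤ b * ‖u.2 - v.2‖ + δ * ‖u - v‖ :=
        add_le_add (B.le_of_opNorm_le hB _) ((norm_snd_le _).trans (hg u hu v hv))

theorem norm_graphTransformStep_sub_le (hξ₀ : 0 ≤ ξ₀)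
    (hφ : LipschitzOnWith ξ₀.toNNReal φ (closedBall 0 R))
    (hA : ‖(A.symm : E →L[𝕜] E)‖ ≤ a) (hB : ‖B‖ ≤ b)
    (hg : ∀ u ∈ ball (0 : E × F) R₀, ∀ v ∈ ball (0 : E × F) R₀,
      ‖g u - g v - (A : E →L[𝕜] E).prodMap B (u - v)‖ ≤ δ * ‖u - v‖)
    {u v : E × F} (hu : u ∈ ball 0 R₀) (hv : v ∈ ball 0 R₀)
    (hgu : (g u).2 ∈ closedBall 0 R) (hgv : (g v).2 ∈ closedBall 0 R) :
    ‖graphTransformStep A g φ u - graphTransformStep A g φ v‖ ≤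
      a * (δ * (1 + ξ₀) * ‖u - v‖ + ξ₀ * b * ‖u.2 - v.2‖) := by
  set w := g u - g v - (A : E →L[𝕜] E).prodMap B (u - v)
  have hsplit : graphTransformStep A g φ u - graphTransformStep A g φ v =
      A.symm ((φ (g u).2 - φ (g v).2) - w.1) := by
    simp only [graphTransformStep, w, map_sub, ContinuousLinearMap.coe_prodMap',
      ContinuousLinearEquiv.coe_coe, Prod.fst_sub, Prod.map_fst,
      ContinuousLinearEquiv.symm_apply_apply]
    abel
  have hφ' : ‖φ (g u).2 - φ (g v).2‖ ≤ ξ₀ * ‖(g u).2 - (g v).2‖ := by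
    simpa [hξ₀] using hφ.norm_sub_le hgu hgv
  rw [hsplit]
  calc ‖A.symm ((φ (g u).2 - φ (g v).2) - w.1)‖
      ≤ a * ‖(φ (g u).2 - φ (g v).2) - w.1‖ :=
        (A.symm : E →L[𝕜] E).le_of_opNorm_le hA _
    _ ≤ a * (ξ₀ * (b * ‖u.2 - v.2‖ + δ * ‖u - v‖) + δ * ‖u - v‖) := by
        gcongr
        · exact (norm_nonneg _).trans hA
        refine (norm_sub_le _ _).trans (add_le_add ?_ ((norm_fst_le w).trans (hg u hu v hv)))
        exact hφ'.trans (by gcongr; exact norm_snd_image_sub_le hB hg hu hv)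
    _ = a * (δ * (1 + ξ₀) * ‖u - v‖ + ξ₀ * b * ‖u.2 - v.2‖) := by ring

theorem norm_le_add_norm_snd_of_norm_fst_le (hξ₀₁ : ξ₀ ≤ 1) (hR' : 0 ≤ R') {u : E × F}
    (hu : ‖u.1‖ ≤ R' + ξ₀ * ‖u.2‖) : ‖u‖ ≤ R' + ‖u.2‖ :=
  max_le (hu.trans (by nlinarith [norm_nonneg u.2])) (by linarith)

theorem mem_ball_and_snd_image_mem_closedBall (hB : ‖B‖ ≤ b)
    (hg : ∀ u ∈ ball (0 : E × F) R₀, ∀ v ∈ ball (0 : E × F) R₀,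
      ‖g u - g v - (A : E →L[𝕜] E).prodMap B (u - v)‖ ≤ δ * ‖u - v‖)
    (hg0 : g 0 = 0) (hδ : 0 ≤ δ) (hξ₀₁ : ξ₀ ≤ 1) (hR' : 0 ≤ R') (hR₀ : R' + r < R₀)
    (hR : b * r + δ * (R' + r) ≤ R) {u : E × F} (hu₂ : ‖u.2‖ ≤ r)
    (hu₁ : ‖u.1‖ ≤ R' + ξ₀ * ‖u.2‖) :
    u ∈ ball 0 R₀ ∧ (g u).2 ∈ closedBall 0 R := by
  have hu : ‖u‖ ≤ R' + r :=
    (norm_le_add_norm_snd_of_norm_fst_le hξ₀₁ hR' hu₁).trans (by linarith)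
  have hu_mem : u ∈ ball 0 R₀ := mem_ball_zero_iff.mpr (by linarith)
  have h0_mem : (0 : E × F) ∈ ball 0 R₀ := mem_ball_self ((norm_nonneg u).trans_lt (by linarith))
  refine ⟨hu_mem, mem_closedBall_zero_iff.mpr ?_⟩
  have hb : 0 ≤ b := (norm_nonneg B).trans hB
  calc ‖(g u).2‖ = ‖(g u).2 - (g 0).2‖ := by simp [hg0]
    _ ≤ b * ‖u.2 - (0 : E × F).2‖ + δ * ‖u - 0‖ := norm_snd_image_sub_le hB hg hu_mem h0_mem
    _ ≤ b * r + δ * (R' + r) := by simp only [Prod.snd_zero, sub_zero]; gcongr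
    _ ≤ R := hR

theorem norm_graphTransformStep_le (hξ₀ : 0 ≤ ξ₀) (hξ₀₁ : ξ₀ ≤ 1)
    (hφ : LipschitzOnWith ξ₀.toNNReal φ (closedBall 0 R)) (hφ0 : ‖φ 0‖ ≤ R')
    (hA : ‖(A.symm : E →L[𝕜] E)‖ ≤ a) (hB : ‖B‖ ≤ b)
    (hg : ∀ u ∈ ball (0 : E × F) R₀, ∀ v ∈ ball (0 : E × F) R₀,
      ‖g u - g v - (A : E →L[𝕜] E).prodMap B (u - v)‖ ≤ δ * ‖u - v‖)
    (hg0 : g 0 = 0) (hδ : 0 ≤ δ) (hR₀ : R' + r < R₀) (hR : b * r + δ * (R' + r) ≤ R)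
    (hκ : a * (1 + δ * (1 + ξ₀)) ≤ 1) (hslope : a * (ξ₀ * b + δ * (1 + ξ₀)) ≤ ξ₀)
    {x : E} {y : F} (hy : ‖y‖ ≤ r) (hx : ‖x‖ ≤ R' + ξ₀ * ‖y‖) :
    ‖graphTransformStep A g φ (x, y)‖ ≤ R' + ξ₀ * ‖y‖ := by
  have hR' : 0 ≤ R' := (norm_nonneg _).trans hφ0
  have ha : 0 ≤ a := (norm_nonneg _).trans hA
  obtain ⟨hxy, hgxy⟩ :=
    mem_ball_and_snd_image_mem_closedBall hB hg hg0 hδ hξ₀₁ hR' hR₀ hR (u := (x, y)) hy hx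
  obtain ⟨h0, hg0'⟩ := mem_ball_and_snd_image_mem_closedBall hB hg hg0 hδ hξ₀₁ hR' hR₀ hR
    (u := 0) (by simpa using (norm_nonneg y).trans hy) (by simpa using hR')
  have hstep0 : ‖graphTransformStep A g φ 0‖ ≤ a * R' := by
    simp only [graphTransformStep, hg0, Prod.fst_zero, Prod.snd_zero, zero_sub, map_neg,
      sub_neg_eq_add, zero_add]
    exact ((A.symm : E →L[𝕜] E).le_of_opNorm_le hA _).trans (by gcongr)
  have hdiff := norm_graphTransformStep_sub_le hξ₀ hφ hA hB hg hxy h0 hgxy hg0'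
  have hnorm : ‖(x, y)‖ ≤ R' + ‖y‖ := norm_le_add_norm_snd_of_norm_fst_le hξ₀₁ hR' hx
  simp only [sub_zero, Prod.snd_zero] at hdiff
  calc ‖graphTransformStep A g φ (x, y)‖
      ≤ ‖graphTransformStep A g φ 0‖ +
        ‖graphTransformStep A g φ (x, y) - graphTransformStep A g φ 0‖ := norm_le_insert' _ _
    _ ≤ a * R' + a * (δ * (1 + ξ₀) * (R' + ‖y‖) + ξ₀ * b * ‖y‖) := by
        gcongr
        exact hdiff.trans (by gcongr)
    _ = a * (1 + δ * (1 + ξ₀)) * R' + a * (ξ₀ * b + δ * (1 + ξ₀)) * ‖y‖ := by ring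
    _ ≤ R' + ξ₀ * ‖y‖ :=
        add_le_add (mul_le_of_le_one_left hR' hκ) (by gcongr)

theorem exists_graphTransformStep_eq_self [CompleteSpace E] (hξ₀ : 0 ≤ ξ₀) (hξ₀₁ : ξ₀ ≤ 1)
    (hφ : LipschitzOnWith ξ₀.toNNReal φ (closedBall 0 R)) (hφ0 : ‖φ 0‖ ≤ R')
    (hA : ‖(A.symm : E →L[𝕜] E)‖ ≤ a) (hB : ‖B‖ ≤ b)
    (hg : ∀ u ∈ ball (0 : E × F) R₀, ∀ v ∈ ball (0 : E × F) R₀,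
      ‖g u - g v - (A : E →L[𝕜] E).prodMap B (u - v)‖ ≤ δ * ‖u - v‖)
    (hg0 : g 0 = 0) (hδ : 0 ≤ δ) (hR₀ : R' + r < R₀) (hR : b * r + δ * (R' + r) ≤ R)
    (hκ : a * (1 + δ * (1 + ξ₀)) ≤ 1) (hslope : a * (ξ₀ * b + δ * (1 + ξ₀)) ≤ ξ₀)
    {y : F} (hy : ‖y‖ ≤ r) :
    ∃ x, ‖x‖ ≤ R' + ξ₀ * ‖y‖ ∧ graphTransformStep A g φ (x, y) = x := by
  have hR' : 0 ≤ R' := (norm_nonneg _).trans hφ0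
  have ha : 0 ≤ a := (norm_nonneg _).trans hA
  have hmem {x : E} (hx : x ∈ closedBall 0 (R' + ξ₀ * ‖y‖)) :=
    mem_ball_and_snd_image_mem_closedBall hB hg hg0 hδ hξ₀₁ hR' hR₀ hR (u := (x, y)) hy
      (mem_closedBall_zero_iff.mp hx)
  have hmaps : MapsTo (fun x => graphTransformStep A g φ (x, y))
      (closedBall 0 (R' + ξ₀ * ‖y‖)) (closedBall 0 (R' + ξ₀ * ‖y‖)) := fun x hx =>
    mem_closedBall_zero_iff.mpr <| norm_graphTransformStep_le hξ₀ hξ₀₁ hφ hφ0 hA hB hg hg0 hδ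
      hR₀ hR hκ hslope hy (mem_closedBall_zero_iff.mp hx)
  have hκ := mul_lt_one_of_mul_one_add_le_one ha hκ
  have hlip : LipschitzOnWith (a * (δ * (1 + ξ₀))).toNNReal
      (fun x => graphTransformStep A g φ (x, y)) (closedBall 0 (R' + ξ₀ * ‖y‖)) := by
    refine lipschitzOnWith_iff_norm_sub_le.mpr fun x hx x' hx' => ?_
    have := norm_graphTransformStep_sub_le hξ₀ hφ hA hB hg (hmem hx).1 (hmem hx').1
      (hmem hx).2 (hmem hx').2
    rw [Real.coe_toNNReal _ (by positivity)]
    simpa [mul_assoc] using this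
  obtain ⟨x, hx, hfix⟩ := exists_isFixedPt_of_lipschitzOnWith isClosed_closedBall.isComplete
    ⟨0, mem_closedBall_self (by positivity)⟩ hmaps
    (by rwa [← NNReal.coe_lt_one, Real.coe_toNNReal _ (by positivity)]) hlip
  exact ⟨x, mem_closedBall_zero_iff.mp hx, hfix⟩

theorem lipschitzOnWith_of_graphTransformStep_eq_self {ψ : F → E} (hξ₀ : 0 ≤ ξ₀)
    (hφ : LipschitzOnWith ξ₀.toNNReal φ (closedBall 0 R))
    (hA : ‖(A.symm : E →L[𝕜] E)‖ ≤ a) (hB : ‖B‖ ≤ b)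
    (hg : ∀ u ∈ ball (0 : E × F) R₀, ∀ v ∈ ball (0 : E × F) R₀,
      ‖g u - g v - (A : E →L[𝕜] E).prodMap B (u - v)‖ ≤ δ * ‖u - v‖) (hδ : 0 ≤ δ)
    (hκ : a * (1 + δ * (1 + ξ₀)) ≤ 1)
    (hslope : a * (ξ₀ * b + δ * (1 + ξ₀)) ≤ ξ₀ * (1 - a * (δ * (1 + ξ₀))))
    (hψ : ∀ y ∈ closedBall 0 r, (ψ y, y) ∈ ball 0 R₀ ∧ (g (ψ y, y)).2 ∈ closedBall 0 R ∧
      graphTransformStep A g φ (ψ y, y) = ψ y) :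
    LipschitzOnWith ξ₀.toNNReal ψ (closedBall 0 r) := by
  have ha : 0 ≤ a := (norm_nonneg _).trans hA
  have hκ := mul_lt_one_of_mul_one_add_le_one ha hκ
  refine lipschitzOnWith_iff_norm_sub_le.mpr fun y hy y' hy' => ?_
  obtain ⟨hu, hgu, hfix⟩ := hψ y hy
  obtain ⟨hv, hgv, hfix'⟩ := hψ y' hy'
  have hstep := norm_graphTransformStep_sub_le hξ₀ hφ hA hB hg hu hv hgu hgv
  rw [hfix, hfix'] at hstep
  have hnorm : ‖(ψ y, y) - (ψ y', y')‖ ≤ ‖ψ y - ψ y'‖ + ‖y - y'‖ :=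
    max_le (le_add_of_nonneg_right (norm_nonneg _)) (le_add_of_nonneg_left (norm_nonneg _))
  rw [Real.coe_toNNReal _ hξ₀]
  refine le_mul_of_le_mul_add (norm_nonneg _) hκ (c := a * ξ₀ * b) (by linarith) ?_
  calc ‖ψ y - ψ y'‖ ≤ a * (δ * (1 + ξ₀) * ‖(ψ y, y) - (ψ y', y')‖ + ξ₀ * b * ‖y - y'‖) := hstep
    _ ≤ a * (δ * (1 + ξ₀) * (‖ψ y - ψ y'‖ + ‖y - y'‖) + ξ₀ * b * ‖y - y'‖) := by
        gcongr
    _ = a * (δ * (1 + ξ₀)) * (‖ψ y - ψ y'‖ + ‖y - y'‖) + a * ξ₀ * b * ‖y - y'‖ := by ring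

theorem exists_image_graph_subset_of_radius_zero (hg0 : g 0 = 0) (hφ0 : φ 0 = 0) (K : ℝ≥0) :
    ∃ ψ : F → E, LipschitzOnWith K ψ (closedBall 0 0) ∧ ψ 0 = 0 ∧
      g '' ((fun y => (ψ y, y)) '' closedBall 0 0) ⊆ (fun y => (φ y, y)) '' closedBall 0 0 := by
  refine ⟨0, LipschitzWith.const' 0 |>.lipschitzOnWith, rfl, ?_⟩
  simp only [closedBall_zero, image_singleton, hφ0, Pi.zero_apply]
  exact singleton_subset_iff.mpr hg0

theorem exists_lipschitzOnWith_image_graph_subset [CompleteSpace E] (hξ₀ : 0 ≤ ξ₀)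
    (hξ₀₁ : ξ₀ ≤ 1) (hφ : LipschitzOnWith ξ₀.toNNReal φ (closedBall 0 R)) (hφ0 : ‖φ 0‖ ≤ R')
    (hA : ‖(A.symm : E →L[𝕜] E)‖ ≤ a) (hB : ‖B‖ ≤ b)
    (hg : ∀ u ∈ ball (0 : E × F) R₀, ∀ v ∈ ball (0 : E × F) R₀,
      ‖g u - g v - (A : E →L[𝕜] E).prodMap B (u - v)‖ ≤ δ * ‖u - v‖)
    (hg0 : g 0 = 0) (hδ : 0 ≤ δ) (hr : 0 ≤ r) (hR₀ : R' + r < R₀)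
    (hR : b * r + δ * (R' + r) ≤ R) (hκ : a * (1 + δ * (1 + ξ₀)) ≤ 1)
    (hslope : a * (ξ₀ * b + δ * (1 + ξ₀)) ≤ ξ₀ * (1 - a * (δ * (1 + ξ₀)))) :
    ∃ ψ : F → E, LipschitzOnWith ξ₀.toNNReal ψ (closedBall 0 r) ∧ ‖ψ 0‖ ≤ R' ∧
      g '' ((fun y => (ψ y, y)) '' closedBall 0 r) ⊆ (fun y => (φ y, y)) '' closedBall 0 R := by
  have hR' : 0 ≤ R' := (norm_nonneg _).trans hφ0
  have hκ₀ : 0 ≤ a * (δ * (1 + ξ₀)) := by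
    have := (norm_nonneg _).trans hA
    positivity
  have hslope' : a * (ξ₀ * b + δ * (1 + ξ₀)) ≤ ξ₀ :=
    hslope.trans (mul_le_of_le_one_right hξ₀ (by linarith))
  choose! ψ hψ hψ_fix using fun y (hy : ‖y‖ ≤ r) => exists_graphTransformStep_eq_self hξ₀ hξ₀₁ hφ
    hφ0 hA hB hg hg0 hδ hR₀ hR hκ hslope' hy
  have hmem (y : F) (hy : y ∈ closedBall 0 r) :=
    mem_ball_and_snd_image_mem_closedBall hB hg hg0 hδ hξ₀₁ hR' hR₀ hR (u := (ψ y, y))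
      (mem_closedBall_zero_iff.mp hy) (hψ y (mem_closedBall_zero_iff.mp hy))
  refine ⟨ψ, ?_, ?_, ?_⟩
  · refine lipschitzOnWith_of_graphTransformStep_eq_self hξ₀ hφ hA hB hg hδ hκ hslope
      fun y hy => ⟨(hmem y hy).1, (hmem y hy).2, hψ_fix y (mem_closedBall_zero_iff.mp hy)⟩
  · simpa using hψ 0 (by simpa using hr)
  · rintro _ ⟨_, ⟨y, hy, rfl⟩, rfl⟩
    have hgraph := graphTransformStep_eq_self_iff.mp (hψ_fix y (mem_closedBall_zero_iff.mp hy))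
    exact ⟨(g (ψ y, y)).2, (hmem y hy).2, Prod.ext hgraph.symm rfl⟩

end GraphTransform

theorem graph_transform_noninvertible_general
    (k₁ k₂ : ℕ)
    (A : EuclideanSpace ℂ (Fin k₁) ≃L[ℂ] EuclideanSpace ℂ (Fin k₁))
    (B : EuclideanSpace ℂ (Fin k₂) →L[ℂ] EuclideanSpace ℂ (Fin k₂))
    (ξ₀ ε δ : ℝ) (hξ₀0 : 0 ≤ ξ₀) (hξ₀1 : ξ₀ ≤ 1) (hδ0 : 0 < δ) (hδε : δ < 2 * ε)
    (h2 : (ξ₀ * ‖B‖ + δ * (1 + ξ₀)) *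
        (‖(A.symm : EuclideanSpace ℂ (Fin k₁) →L[ℂ] EuclideanSpace ℂ (Fin k₁))‖⁻¹
          - δ * (1 + ξ₀))⁻¹ ≤ ξ₀)
    (h3 : (‖B‖ + 2 * δ) * Real.exp (-2 * ε) + δ ≤ 1)
    (h4 : δ * (1 + ξ₀) ≤ min
        ((‖(A.symm : EuclideanSpace ℂ (Fin k₁) →L[ℂ] EuclideanSpace ℂ (Fin k₁))‖⁻¹
            - ξ₀ * ‖B‖) / 2)
        (‖(A.symm : EuclideanSpace ℂ (Fin k₁) →L[ℂ] EuclideanSpace ℂ (Fin k₁))‖⁻¹ - 1))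
    (R₀ : ℝ)
    (g : EuclideanSpace ℂ (Fin k₁) × EuclideanSpace ℂ (Fin k₂) →
      EuclideanSpace ℂ (Fin k₁) × EuclideanSpace ℂ (Fin k₂))
    (hg0 : g 0 = 0)
    (hghol : DifferentiableOn ℂ g (ball 0 R₀))
    (hDg0 : fderiv ℂ g 0 =
      ContinuousLinearMap.prodMap
        (A : EuclideanSpace ℂ (Fin k₁) →L[ℂ] EuclideanSpace ℂ (Fin k₁)) B)
    (hDg : ∀ w ∈ ball (0 : EuclideanSpace ℂ (Fin k₁) × EuclideanSpace ℂ (Fin k₂)) R₀,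
      ‖fderiv ℂ g w - fderiv ℂ g 0‖ ≤ δ)
    (R R' : ℝ) (hR'R : R' ≤ R) (hRR₀ : R ≤ R₀ / 2)
    (φ : EuclideanSpace ℂ (Fin k₂) → EuclideanSpace ℂ (Fin k₁))
    (hφ0 : ‖φ 0‖ ≤ R')
    (hφlip : LipschitzOnWith ξ₀.toNNReal φ (closedBall 0 R)) :
    ∃ ψ : EuclideanSpace ℂ (Fin k₂) → EuclideanSpace ℂ (Fin k₁),
      LipschitzOnWith ξ₀.toNNReal ψ (closedBall 0 (R * Real.exp (-2 * ε))) ∧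
      ‖ψ 0‖ ≤ R' ∧
      g '' ((fun y => (ψ y, y)) '' closedBall 0 (R * Real.exp (-2 * ε)))
        ⊆ (fun y => (φ y, y)) '' closedBall 0 R := by
  set a := ‖(A.symm : EuclideanSpace ℂ (Fin k₁) →L[ℂ] EuclideanSpace ℂ (Fin k₁))‖
  set e := Real.exp (-2 * ε)
  have hR'0 : 0 ≤ R' := (norm_nonneg _).trans hφ0
  rcases (hR'0.trans hR'R).eq_or_lt with rfl | hR
  · -- `R₀` may vanish here, so nothing is known about `g` beyond `g 0 = 0`
    obtain ⟨ψ, hψ, hψ0, hψg⟩ := exists_image_graph_subset_of_radius_zero hg0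
      (norm_le_zero_iff.mp (hφ0.trans hR'R)) ξ₀.toNNReal
    rw [zero_mul]
    exact ⟨ψ, hψ, hψ0 ▸ norm_zero.trans_le hR'0, hψg⟩
  have he : e < 1 := Real.exp_lt_one_iff.mpr (by linarith)
  have hc : δ * (1 + ξ₀) ≤ a⁻¹ - 1 := h4.trans (min_le_right _ _)
  have hg (u) (hu : u ∈ ball 0 R₀) (v) (hv : v ∈ ball 0 R₀) :=
    hDg0 ▸ (convex_ball 0 R₀).norm_image_sub_le_of_norm_fderiv_le'
      (fun w hw => hghol.differentiableAt (isOpen_ball.mem_nhds hw)) hDg hv hu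
  refine exists_lipschitzOnWith_image_graph_subset hξ₀0 hξ₀1 hφlip hφ0 le_rfl le_rfl hg hg0
    hδ0.le (by positivity) ?_ ?_ (mul_one_add_le_one_of_le_inv_sub_one (norm_nonneg _) hc)
    (mul_le_mul_one_sub_of_mul_inv_sub_le (norm_nonneg _) hc hξ₀0 h2)
  · nlinarith [mul_lt_of_lt_one_right hR he]
  · nlinarith [mul_le_mul_of_nonneg_left h3 hR.le, mul_le_mul_of_nonneg_left hR'R hδ0.le,
      mul_pos (mul_pos hδ0 hR) (Real.exp_pos (-2 * ε))]

/-- **Theorem (graph transform, non-invertible case).**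
`ℂ^k = ℂ^{k₁} × ℂ^{k₂}`; `A : ℂ^{k₁} → ℂ^{k₁}` is an invertible linear map,
`B : ℂ^{k₂} → ℂ^{k₂}` a linear map with `‖B‖ < ‖A⁻¹‖⁻¹` (so that
`ξ = 1 - ‖B‖‖A⁻¹‖ ∈ (0,1]`). Let `0 ≤ ξ₀ ≤ 1` and `0 < δ < 2ε` satisfy the four stated
inequalities. Let `g : B_k(0,R₀) → B_k(0,R₁)` be holomorphic with `R₀ ≤ R₁`, `g(0) = 0`,
`Dg(0) = (A, B)` block diagonal, and `‖Dg(w) - Dg(0)‖ ≤ δ` on `B_k(0,R₀)`.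
If `φ : B_{k₂}(0,R) → ℂ^{k₁}` satisfies `‖φ(0)‖ ≤ R'` and `Lip(φ) ≤ ξ₀` for some
`R' ≤ R ≤ R₀/2`, then there is `ψ : B_{k₂}(0, R e^{-2ε}) → ℂ^{k₁}` with `Lip(ψ) ≤ ξ₀`,
`‖ψ(0)‖ ≤ R'` and `g(graph(ψ)) ⊆ graph(φ)`. -/
theorem graph_transform_noninvertible
    (k₁ k₂ : ℕ)
    (A : EuclideanSpace ℂ (Fin k₁) ≃L[ℂ] EuclideanSpace ℂ (Fin k₁))
    (B : EuclideanSpace ℂ (Fin k₂) →L[ℂ] EuclideanSpace ℂ (Fin k₂))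
    (hAB : ‖B‖ < ‖(A.symm : EuclideanSpace ℂ (Fin k₁) →L[ℂ] EuclideanSpace ℂ (Fin k₁))‖⁻¹)
    (ξ₀ ε δ : ℝ) (hξ₀0 : 0 ≤ ξ₀) (hξ₀1 : ξ₀ ≤ 1) (hδ0 : 0 < δ) (hδε : δ < 2 * ε)
    (h1 : ξ₀ * (‖B‖ *
        ‖(A.symm : EuclideanSpace ℂ (Fin k₁) →L[ℂ] EuclideanSpace ℂ (Fin k₁))‖)
      + 2 * δ * (1 + ξ₀) *
        ‖(A.symm : EuclideanSpace ℂ (Fin k₁) →L[ℂ] EuclideanSpace ℂ (Fin k₁))‖ ≤ 1)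
    (h2 : (ξ₀ * ‖B‖ + δ * (1 + ξ₀)) *
        (‖(A.symm : EuclideanSpace ℂ (Fin k₁) →L[ℂ] EuclideanSpace ℂ (Fin k₁))‖⁻¹
          - δ * (1 + ξ₀))⁻¹ ≤ ξ₀)
    (h3 : (‖B‖ + 2 * δ) * Real.exp (-2 * ε) + δ ≤ 1)
    (h4 : δ * (1 + ξ₀) ≤ min
        ((‖(A.symm : EuclideanSpace ℂ (Fin k₁) →L[ℂ] EuclideanSpace ℂ (Fin k₁))‖⁻¹
            - ξ₀ * ‖B‖) / 2)
        (‖(A.symm : EuclideanSpace ℂ (Fin k₁) →L[ℂ] EuclideanSpace ℂ (Fin k₁))‖⁻¹ - 1))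
    (R₀ R₁ : ℝ) (hR₀R₁ : R₀ ≤ R₁)
    (g : EuclideanSpace ℂ (Fin k₁) × EuclideanSpace ℂ (Fin k₂) →
      EuclideanSpace ℂ (Fin k₁) × EuclideanSpace ℂ (Fin k₂))
    (hgmaps : MapsTo g (ball 0 R₀) (ball 0 R₁))
    (hg0 : g 0 = 0)
    (hghol : DifferentiableOn ℂ g (ball 0 R₀))
    (hDg0 : fderiv ℂ g 0 =
      ContinuousLinearMap.prodMap
        (A : EuclideanSpace ℂ (Fin k₁) →L[ℂ] EuclideanSpace ℂ (Fin k₁)) B)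
    (hDg : ∀ w ∈ ball (0 : EuclideanSpace ℂ (Fin k₁) × EuclideanSpace ℂ (Fin k₂)) R₀,
      ‖fderiv ℂ g w - fderiv ℂ g 0‖ ≤ δ)
    (R R' : ℝ) (hR'R : R' ≤ R) (hRR₀ : R ≤ R₀ / 2)
    (φ : EuclideanSpace ℂ (Fin k₂) → EuclideanSpace ℂ (Fin k₁))
    (hφ0 : ‖φ 0‖ ≤ R')
    (hφlip : LipschitzOnWith ξ₀.toNNReal φ (closedBall 0 R)) :
    ∃ ψ : EuclideanSpace ℂ (Fin k₂) → EuclideanSpace ℂ (Fin k₁),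
      LipschitzOnWith ξ₀.toNNReal ψ (closedBall 0 (R * Real.exp (-2 * ε))) ∧
      ‖ψ 0‖ ≤ R' ∧
      g '' ((fun y => (ψ y, y)) '' closedBall 0 (R * Real.exp (-2 * ε)))
        ⊆ (fun y => (φ y, y)) '' closedBall 0 R :=
  graph_transform_noninvertible_general k₁ k₂ A B ξ₀ ε δ hξ₀0 hξ₀1 hδ0 hδε h2 h3 h4 R₀ g hg0 hghol
    hDg0 hDg R R' hR'R hRR₀ φ hφ0 hφlip
end
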